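/- arXiv:2411.10586 — 7 statements merged into one kernel-verified Lean document; each statement's English description precedes it below -/
import Mathlib

section
/- Let Y be a particle-generated Nevanlinna function with particle sequence x : ℕ → ℝ and constants b ∈ ℝ, c ≥ 0. Then for every integer k ≥ 1 and every w ∈ ℍ, the k-th complex derivative of Y satisfies |Y^{(k)}(w)| ≤ k! · Im Y(w) / (Im w)^k; moreover Im Y(w) ≤ |Y(w)|, so also |Y^{(k)}(w)| ≤ k! · |Y(w)| / (Im w)^k. -/
/-!
Differentiating the series termwise gives `Y' = c + ∑ (xᵢ - w)⁻²` and
`Y⁽ᵏ⁾ = k! ∑ (xᵢ - w)^(-(k+1))` for `k ≥ 2`, while `Im Y(w) = Im w · (c + ∑ |xᵢ - w|⁻²)`.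
Since `|xᵢ - w| ≥ Im w`, the `i`-th term of `Y⁽ᵏ⁾` is at most `k! / (Im w)^k` times the
contribution `Im w / |xᵢ - w|²` of `xᵢ` to `Im Y(w)`, and the linear term only enters for `k = 1`.
-/

open Metric Filter Topology

section InvSubPow

variable {ι : Type*}

lemma norm_sub_le_two_mul_norm_sub {a w z : ℂ} {r : ℝ} (ha : r ≤ ‖a - w‖)
    (hz : z ∈ ball w (r / 2)) : ‖a - w‖ ≤ 2 * ‖a - z‖ := by
  have h := norm_sub_le_norm_sub_add_norm_sub a z w
  rw [mem_ball, dist_eq_norm] at hz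
  linarith

lemma hasDerivAt_inv_sub_pow {a z : ℂ} (h : a - z ≠ 0) (n : ℕ) :
    HasDerivAt (fun z => (a - z)⁻¹ ^ (n + 1)) ((n + 1) * (a - z)⁻¹ ^ (n + 2)) z := by
  have hsub : HasDerivAt (fun z : ℂ => a - z) (-1) z := (hasDerivAt_id z).const_sub a
  refine ((hsub.inv h).pow (n + 1)).congr_deriv ?_
  rw [Nat.add_sub_cancel, neg_neg, one_div, ← inv_pow, Pi.inv_apply]
  push_cast
  ring

/-- On the ball `B(w, r/2)` every `‖aᵢ - z‖` is at least half of `‖aᵢ - w‖ ≥ r`, which gives a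
summable bound on the derivatives. -/
theorem hasDerivAt_tsum_inv_sub_pow_sub {a : ι → ℂ} {w : ℂ} {r : ℝ} (hr : 0 < r)
    (ha : ∀ i, r ≤ ‖a i - w‖) (hs : Summable fun i => ‖a i - w‖⁻¹ ^ 2) (n : ℕ) (c : ι → ℂ)
    (hc : Summable fun i => (a i - w)⁻¹ ^ (n + 1) - c i) :
    HasDerivAt (fun z => ∑' i, ((a i - z)⁻¹ ^ (n + 1) - c i))
      ((n + 1) * ∑' i, (a i - w)⁻¹ ^ (n + 2)) w := by
  have hw : w ∈ ball w (r / 2) := mem_ball_self (by positivity)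
  have hinv : ∀ i, ∀ z ∈ ball w (r / 2), ‖a i - z‖⁻¹ ≤ 2 * ‖a i - w‖⁻¹ := by
    intro i z hz
    have h2 := norm_sub_le_two_mul_norm_sub (ha i) hz
    have hpos : 0 < ‖a i - w‖ := hr.trans_le (ha i)
    rw [inv_le_comm₀ (by linarith) (by positivity), mul_inv, inv_inv]
    linarith
  rw [← tsum_mul_left]
  refine hasDerivAt_tsum_of_isPreconnected
    (u := fun i => (n + 1) * (2 * r⁻¹) ^ n * (2 * ‖a i - w‖⁻¹) ^ 2)
    (g := fun i z => (a i - z)⁻¹ ^ (n + 1) - c i)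
    (g' := fun i z => (n + 1) * (a i - z)⁻¹ ^ (n + 2))
    ?_ isOpen_ball (convex_ball w _).isPreconnected (fun i z hz => ?_) (fun i z hz => ?_) hw hc hw
  · simp_rw [mul_pow]
    exact (hs.mul_left _).mul_left _
  · have hne : a i - z ≠ 0 := by
      have := (hr.trans_le (ha i)).trans_le (norm_sub_le_two_mul_norm_sub (ha i) hz)
      exact norm_pos_iff.mp (by linarith)
    exact (hasDerivAt_inv_sub_pow hne n).sub_const (c i)
  · have hzi := hinv i z hz
    have hwi : ‖a i - w‖⁻¹ ≤ r⁻¹ := inv_anti₀ hr (ha i)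
    rw [norm_mul, norm_pow, norm_inv, pow_add, ← mul_assoc]
    have : ‖(n : ℂ) + 1‖ = n + 1 := by norm_cast
    rw [this]
    gcongr
    linarith

end InvSubPow

section Particles

variable {ι : Type*} {x : ι → ℝ} {z : ℂ}

lemma eventually_im_pos (hz : 0 < z.im) : ∀ᶠ w in 𝓝 z, 0 < w.im :=
  (Complex.continuous_im.tendsto z).eventually (lt_mem_nhds hz)

lemma im_le_norm_ofReal_sub (t : ℝ) (z : ℂ) : z.im ≤ ‖(t : ℂ) - z‖ := by
  have h := Complex.abs_im_le_norm ((t : ℂ) - z)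
  rw [Complex.sub_im, Complex.ofReal_im, zero_sub, abs_neg] at h
  exact (le_abs_self _).trans h

lemma one_add_sq_le_mul_norm_sub_sq (t : ℝ) (hz : 0 < z.im) :
    1 + t ^ 2 ≤ (2 + (1 + 2 * z.re ^ 2) / z.im ^ 2) * ‖(t : ℂ) - z‖ ^ 2 := by
  have hnorm : ‖(t : ℂ) - z‖ ^ 2 = (t - z.re) ^ 2 + z.im ^ 2 := by
    rw [Complex.sq_norm, Complex.normSq_apply, Complex.sub_re, Complex.sub_im, Complex.ofReal_re,
      Complex.ofReal_im]
    ring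
  have hdiv : (1 + 2 * z.re ^ 2) / z.im ^ 2 * z.im ^ 2 = 1 + 2 * z.re ^ 2 := by
    field_simp
  rw [hnorm]
  nlinarith [sq_nonneg (t - 2 * z.re), mul_nonneg (div_nonneg (by positivity : (0:ℝ) ≤ 1 + 2 * z.re ^ 2) (sq_nonneg z.im))
      (sq_nonneg (t - z.re))]

lemma summable_norm_inv_sub_sq (hx : Summable fun i => 1 / (1 + x i ^ 2)) (hz : 0 < z.im) :
    Summable fun i => ‖(x i : ℂ) - z‖⁻¹ ^ 2 := by
  refine Summable.of_nonneg_of_le (fun i => by positivity) (fun i => ?_)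
    (hx.mul_left (2 + (1 + 2 * z.re ^ 2) / z.im ^ 2))
  have hpos : 0 < ‖(x i : ℂ) - z‖ := hz.trans_le (im_le_norm_ofReal_sub _ _)
  rw [inv_pow, mul_one_div, le_div_iff₀ (by positivity), ← div_eq_inv_mul,
    div_le_iff₀ (by positivity)]
  exact one_add_sq_le_mul_norm_sub_sq (x i) hz

lemma norm_inv_ofReal_sub_pow_le (t : ℝ) (hz : 0 < z.im) (n : ℕ) :
    ‖((t : ℂ) - z)⁻¹ ^ (n + 2)‖ ≤ z.im⁻¹ ^ n * ‖(t : ℂ) - z‖⁻¹ ^ 2 := by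
  rw [norm_pow, norm_inv, pow_add]
  gcongr
  exact im_le_norm_ofReal_sub _ _

noncomputable def invSubPowSum (x : ι → ℝ) (n : ℕ) (z : ℂ) : ℂ := ∑' i, ((x i : ℂ) - z)⁻¹ ^ n

lemma norm_invSubPowSum_le (hx : Summable fun i => 1 / (1 + x i ^ 2)) (hz : 0 < z.im) (n : ℕ) :
    ‖invSubPowSum x (n + 2) z‖ ≤ z.im⁻¹ ^ n * ∑' i, ‖(x i : ℂ) - z‖⁻¹ ^ 2 :=
  tsum_of_norm_bounded ((summable_norm_inv_sub_sq hx hz).hasSum.mul_left _)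
    fun i => norm_inv_ofReal_sub_pow_le (x i) hz n

lemma hasDerivAt_invSubPowSum (hx : Summable fun i => 1 / (1 + x i ^ 2)) (hz : 0 < z.im)
    (n : ℕ) : HasDerivAt (invSubPowSum x (n + 2)) ((n + 2) * invSubPowSum x (n + 3) z) z := by
  have hsum : Summable fun i => ((x i : ℂ) - z)⁻¹ ^ (n + 2) - 0 := by
    simp_rw [sub_zero]
    exact .of_norm_bounded ((summable_norm_inv_sub_sq hx hz).mul_left _)
      fun i => norm_inv_ofReal_sub_pow_le (x i) hz n
  have h := hasDerivAt_tsum_inv_sub_pow_sub hz (fun i => im_le_norm_ofReal_sub (x i) z)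
    (summable_norm_inv_sub_sq hx hz) (n + 1) 0 hsum
  simp only [Pi.zero_apply, sub_zero] at h
  refine h.congr_deriv ?_
  rw [invSubPowSum]
  push_cast
  congr 1
  ring

lemma iteratedDeriv_invSubPowSum_two (hx : Summable fun i => 1 / (1 + x i ^ 2)) (k : ℕ) :
    ∀ z : ℂ, 0 < z.im →
      iteratedDeriv k (invSubPowSum x 2) z = (k + 1).factorial * invSubPowSum x (k + 2) z := by
  induction k with
  | zero => simp
  | succ k ih =>
    intro z hz
    have hloc : iteratedDeriv k (invSubPowSum x 2) =ᶠ[𝓝 z]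
        fun z => (k + 1).factorial * invSubPowSum x (k + 2) z :=
      (eventually_im_pos hz).mono ih
    rw [iteratedDeriv_succ, hloc.deriv_eq, ((hasDerivAt_invSubPowSum hx hz k).const_mul _).deriv,
      Nat.factorial_succ (k + 1)]
    push_cast
    ring

noncomputable def particleNevanlinna (x : ι → ℝ) (b c : ℝ) (z : ℂ) : ℂ :=
  b + c * z + ∑' i, (((x i : ℂ) - z)⁻¹ - (x i : ℂ) / (1 + (x i : ℂ) ^ 2))

lemma ofReal_one_add_sq (t : ℝ) : (1 : ℂ) + (t : ℂ) ^ 2 = ((1 + t ^ 2 : ℝ) : ℂ) := by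
  push_cast
  rfl

/-- Writing `1 + t z = (1 + z²) + z (t - z)` shows that the `t`-th term is `O(1 / (1 + t²))`. -/
lemma inv_sub_sub_div_one_add_sq (t : ℝ) (h : (t : ℂ) - z ≠ 0) :
    ((t : ℂ) - z)⁻¹ - t / (1 + t ^ 2) = (z + (1 + z ^ 2) * ((t : ℂ) - z)⁻¹) / (1 + t ^ 2) := by
  have h₁ : (1 : ℂ) + (t : ℂ) ^ 2 ≠ 0 := by
    rw [ofReal_one_add_sq]
    exact_mod_cast (by positivity : (1 + t ^ 2 : ℝ) ≠ 0)
  field_simp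
  ring

lemma summable_inv_sub_sub_div_one_add_sq (hx : Summable fun i => 1 / (1 + x i ^ 2))
    (hz : 0 < z.im) :
    Summable fun i => ((x i : ℂ) - z)⁻¹ - x i / (1 + x i ^ 2) := by
  refine .of_norm_bounded (hx.mul_left (‖z‖ + ‖1 + z ^ 2‖ * z.im⁻¹)) fun i => ?_
  have hpos : 0 < ‖(x i : ℂ) - z‖ := hz.trans_le (im_le_norm_ofReal_sub _ _)
  rw [inv_sub_sub_div_one_add_sq _ (norm_pos_iff.mp hpos), norm_div, ofReal_one_add_sq,
    Complex.norm_of_nonneg (by positivity), ← mul_one_div]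
  gcongr
  refine (norm_add_le _ _).trans ?_
  rw [norm_mul, norm_inv]
  gcongr
  exact im_le_norm_ofReal_sub _ _

lemma im_inv_ofReal_sub_sub_div_one_add_sq (t : ℝ) (z : ℂ) :
    (((t : ℂ) - z)⁻¹ - t / (1 + t ^ 2)).im = z.im * ‖(t : ℂ) - z‖⁻¹ ^ 2 := by
  rw [ofReal_one_add_sq, ← Complex.ofReal_div, Complex.sub_im, Complex.ofReal_im, sub_zero,
    Complex.inv_im, Complex.normSq_eq_norm_sq, Complex.sub_im, Complex.ofReal_im]
  ring

lemma im_particleNevanlinna (b c : ℝ) (hx : Summable fun i => 1 / (1 + x i ^ 2))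
    (hz : 0 < z.im) :
    (particleNevanlinna x b c z).im = z.im * (c + ∑' i, ‖(x i : ℂ) - z‖⁻¹ ^ 2) := by
  rw [particleNevanlinna, Complex.add_im, Complex.add_im,
    Complex.im_tsum (summable_inv_sub_sub_div_one_add_sq hx hz)]
  simp only [im_inv_ofReal_sub_sub_div_one_add_sq, tsum_mul_left, Complex.ofReal_im,
    Complex.im_ofReal_mul]
  ring

lemma hasDerivAt_particleNevanlinna (b c : ℝ) (hx : Summable fun i => 1 / (1 + x i ^ 2))
    (hz : 0 < z.im) :
    HasDerivAt (particleNevanlinna x b c) (c + invSubPowSum x 2 z) z := by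
  have hG := hasDerivAt_tsum_inv_sub_pow_sub hz (fun i => im_le_norm_ofReal_sub (x i) z)
    (summable_norm_inv_sub_sq hx hz) 0 (fun i => x i / (1 + x i ^ 2))
    (by simpa using summable_inv_sub_sub_div_one_add_sq hx hz)
  simp only [zero_add, pow_one, Nat.cast_zero, one_mul] at hG
  have hlin : HasDerivAt (fun z : ℂ => (b : ℂ) + c * z) c z := by
    simpa using ((hasDerivAt_id z).const_mul (c : ℂ)).const_add (b : ℂ)
  exact hlin.add hG

lemma iteratedDeriv_succ_particleNevanlinna (b c : ℝ)
    (hx : Summable fun i => 1 / (1 + x i ^ 2)) (hz : 0 < z.im) (n : ℕ) :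
    iteratedDeriv (n + 1) (particleNevanlinna x b c) z
      = iteratedDeriv n (fun z => c + invSubPowSum x 2 z) z := by
  rw [iteratedDeriv_succ']
  refine EventuallyEq.iteratedDeriv_eq n ?_
  exact (eventually_im_pos hz).mono fun w hw => (hasDerivAt_particleNevanlinna b c hx hw).deriv

lemma norm_iteratedDeriv_succ_particleNevanlinna_le (b : ℝ) {c : ℝ} (hc : 0 ≤ c)
    (hx : Summable fun i => 1 / (1 + x i ^ 2)) (hz : 0 < z.im) (n : ℕ) :
    ‖iteratedDeriv (n + 1) (particleNevanlinna x b c) z‖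
      ≤ (n + 1).factorial * (c + ∑' i, ‖(x i : ℂ) - z‖⁻¹ ^ 2) / z.im ^ n := by
  have hT : 0 ≤ ∑' i, ‖(x i : ℂ) - z‖⁻¹ ^ 2 := tsum_nonneg fun i => by positivity
  rw [iteratedDeriv_succ_particleNevanlinna b c hx hz]
  rcases n with _ | m
  · have h := norm_invSubPowSum_le hx hz 0
    rw [iteratedDeriv_zero]
    simp only [pow_zero, one_mul, div_one] at h ⊢
    refine (norm_add_le _ _).trans ?_
    rw [Complex.norm_of_nonneg hc]
    linarith
  · rw [iteratedDeriv_const_add m.succ_pos, iteratedDeriv_invSubPowSum_two hx (m + 1) z hz,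
      norm_mul, Complex.norm_natCast, mul_div_assoc]
    gcongr
    calc ‖invSubPowSum x (m + 1 + 2) z‖ ≤ z.im⁻¹ ^ (m + 1) * ∑' i, ‖(x i : ℂ) - z‖⁻¹ ^ 2 :=
          norm_invSubPowSum_le hx hz (m + 1)
      _ ≤ (c + ∑' i, ‖(x i : ℂ) - z‖⁻¹ ^ 2) / z.im ^ (m + 1) := by
          rw [inv_pow, inv_mul_eq_div]
          gcongr
          linarith

end Particles

/-- For a particle-generated Nevanlinna function `Y`, every `k ≥ 1`
and `w ∈ ℍ`: `|Y⁽ᵏ⁾(w)| ≤ k! · Im Y(w) / (Im w)^k`; moreover `Im Y(w) ≤ |Y(w)|`, so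
also `|Y⁽ᵏ⁾(w)| ≤ k! · |Y(w)| / (Im w)^k`. -/
theorem stmt_1
    (x : ℕ → ℝ) (b c : ℝ) (hc : 0 ≤ c)
    (hx : Summable fun i => 1 / (1 + (x i) ^ 2))
    (Y : ℂ → ℂ)
    (hY : ∀ w : ℂ, 0 < w.im →
      Y w = (b : ℂ) + (c : ℂ) * w
        + ∑' i : ℕ, (((x i : ℂ) - w)⁻¹ - (x i : ℂ) / (1 + (x i : ℂ) ^ 2)))
    (k : ℕ) (hk : 1 ≤ k) (w : ℂ) (hw : 0 < w.im) :
    ‖iteratedDeriv k Y w‖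
      ≤ (Nat.factorial k : ℝ) * (Y w).im / w.im ^ k ∧
    (Y w).im ≤ ‖Y w‖ ∧
    ‖iteratedDeriv k Y w‖
      ≤ (Nat.factorial k : ℝ) * ‖Y w‖ / w.im ^ k := by
  obtain ⟨n, rfl⟩ : ∃ n, k = n + 1 := ⟨k - 1, by omega⟩
  have hYeq : Y =ᶠ[𝓝 w] particleNevanlinna x b c :=
    (eventually_im_pos hw).mono hY
  have hbound : ‖iteratedDeriv (n + 1) Y w‖ ≤ (n + 1).factorial * (Y w).im / w.im ^ (n + 1) := by
    rw [hYeq.iteratedDeriv_eq, hYeq.eq_of_nhds, im_particleNevanlinna b c hx hw]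
    refine (norm_iteratedDeriv_succ_particleNevanlinna_le b hc hx hw n).trans_eq ?_
    field_simp
    ring
  exact ⟨hbound, Complex.im_le_norm _, hbound.trans (by gcongr; exact Complex.im_le_norm _)⟩
end

section
/- Let Y : ℍ → ℂ be holomorphic on the open upper half-plane ℍ = {w ∈ ℂ : Im w > 0} with Im Y(w) ≥ 0 for all w ∈ ℍ. Then for every a ∈ ℝ and all real numbers 0 < b ≤ η one has |Y(a + ib)| ≤ (η/b) · |Y(a + iη)|. -/
/-!
Schwarz–Pick for the upper half-plane: a holomorphic self-map `F` of `ℍ` does not increase the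
pseudo-hyperbolic distance `|z - w| / |z - conj w|`, as one sees by conjugating `F` with Cayley
transforms into a self-map of the unit disk fixing `0` and applying the Schwarz lemma. For
`z = a + ib`, `w = a + iη` this distance is `(η - b)/(η + b)`, and the triangle inequality
turns `|F z - F w| ≤ (η - b)/(η + b) · |F z - conj (F w)|` into `b |F z| ≤ η |F w|`.
Since `Im Y` may vanish, the bound is applied to `Y + iε` and `ε → 0⁺`.
-/

open Complex Metric Set Filter Topology
open scoped ComplexConjugate
open UpperHalfPlane (upperHalfPlaneSet)

lemma sub_conj_ne_zero_of_im_pos {w p : ℂ} (hw : 0 < w.im) (hp : 0 < p.im) :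
    w - conj p ≠ 0 := by
  intro h
  have := congrArg im h
  simp only [sub_im, conj_im, zero_im] at this
  linarith

lemma one_sub_ne_zero_of_norm_lt_one {z : ℂ} (hz : ‖z‖ < 1) : 1 - z ≠ 0 := by
  rintro h
  rw [← sub_eq_zero.mp h, norm_one] at hz
  exact hz.false

lemma norm_sub_lt_norm_sub_conj {w p : ℂ} (hw : 0 < w.im) (hp : 0 < p.im) :
    ‖w - p‖ < ‖w - conj p‖ := by
  have hsq : normSq (w - conj p) = normSq (w - p) + 4 * w.im * p.im := by
    simp only [normSq_apply, sub_re, sub_im, conj_re, conj_im]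
    ring
  rw [← sq_lt_sq₀ (norm_nonneg _) (norm_nonneg _), ← normSq_eq_norm_sq, ← normSq_eq_norm_sq,
    hsq]
  nlinarith

noncomputable def halfPlaneToDisk (p w : ℂ) : ℂ := (w - p) / (w - conj p)

noncomputable def diskToHalfPlane (w₀ z : ℂ) : ℂ := (w₀ - conj w₀ * z) / (1 - z)

lemma halfPlaneToDisk_self (p : ℂ) : halfPlaneToDisk p p = 0 := by
  simp [halfPlaneToDisk]

lemma norm_halfPlaneToDisk_lt_one {p w : ℂ} (hp : 0 < p.im) (hw : 0 < w.im) :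
    ‖halfPlaneToDisk p w‖ < 1 := by
  have hlt := norm_sub_lt_norm_sub_conj hw hp
  rwa [halfPlaneToDisk, norm_div, div_lt_one ((norm_nonneg _).trans_lt hlt)]

lemma differentiableAt_halfPlaneToDisk {p w : ℂ} (hp : 0 < p.im) (hw : 0 < w.im) :
    DifferentiableAt ℂ (halfPlaneToDisk p) w :=
  (differentiableAt_id.sub_const p).div (differentiableAt_id.sub_const _)
    (sub_conj_ne_zero_of_im_pos hw hp)

lemma diskToHalfPlane_zero (w₀ : ℂ) : diskToHalfPlane w₀ 0 = w₀ := by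
  simp [diskToHalfPlane]

lemma im_diskToHalfPlane (w₀ z : ℂ) :
    (diskToHalfPlane w₀ z).im = w₀.im * (1 - normSq z) / normSq (1 - z) := by
  simp only [diskToHalfPlane, div_im, normSq_apply, sub_re, sub_im, mul_re, mul_im, conj_re,
    conj_im, one_re, one_im]
  ring

lemma im_diskToHalfPlane_pos {w₀ z : ℂ} (hw₀ : 0 < w₀.im) (hz : ‖z‖ < 1) :
    0 < (diskToHalfPlane w₀ z).im := by
  have hz' : normSq z < 1 := by rw [normSq_eq_norm_sq]; nlinarith [norm_nonneg z]
  rw [im_diskToHalfPlane]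
  exact div_pos (mul_pos hw₀ (by linarith))
    (normSq_pos.mpr (one_sub_ne_zero_of_norm_lt_one hz))

lemma differentiableOn_diskToHalfPlane (w₀ : ℂ) :
    DifferentiableOn ℂ (diskToHalfPlane w₀) (ball 0 1) := fun _ hz =>
  (((differentiableAt_const _).sub ((differentiableAt_const _).mul differentiableAt_id)).div
    ((differentiableAt_const _).sub differentiableAt_id)
    (one_sub_ne_zero_of_norm_lt_one (mem_ball_zero_iff.mp hz))).differentiableWithinAt

lemma diskToHalfPlane_halfPlaneToDisk {w₀ w : ℂ} (hw₀ : 0 < w₀.im) (hw : 0 < w.im) :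
    diskToHalfPlane w₀ (halfPlaneToDisk w₀ w) = w := by
  have h₁ := sub_conj_ne_zero_of_im_pos hw hw₀
  have h₂ := sub_conj_ne_zero_of_im_pos hw₀ hw₀
  rw [diskToHalfPlane, halfPlaneToDisk, div_eq_iff]
  · field_simp; ring
  · rw [one_sub_div h₁]; exact div_ne_zero (by rwa [sub_sub_sub_cancel_left]) h₁

theorem norm_sub_mul_le_of_mapsTo_upperHalfPlane {F : ℂ → ℂ}
    (hF : DifferentiableOn ℂ F upperHalfPlaneSet)
    (hmaps : MapsTo F upperHalfPlaneSet upperHalfPlaneSet) {w₀ w : ℂ} (hw₀ : 0 < w₀.im)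
    (hw : 0 < w.im) :
    ‖F w - F w₀‖ * ‖w - conj w₀‖ ≤ ‖w - w₀‖ * ‖F w - conj (F w₀)‖ := by
  set H := halfPlaneToDisk (F w₀) ∘ F ∘ diskToHalfPlane w₀
  have hψ : MapsTo (diskToHalfPlane w₀) (ball 0 1) upperHalfPlaneSet := fun z hz =>
    im_diskToHalfPlane_pos hw₀ (mem_ball_zero_iff.mp hz)
  have hFw₀ : 0 < (F w₀).im := hmaps hw₀
  have hHd : DifferentiableOn ℂ H (ball 0 1) := by
    refine DifferentiableOn.comp (fun v hv => ?_)
      (hF.comp (differentiableOn_diskToHalfPlane w₀) hψ) (hmaps.comp hψ)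
    exact (differentiableAt_halfPlaneToDisk hFw₀ hv).differentiableWithinAt
  have hHmaps : MapsTo H (ball 0 1) (closedBall 0 1) := fun z hz =>
    mem_closedBall_zero_iff.mpr (norm_halfPlaneToDisk_lt_one hFw₀ (hmaps (hψ hz))).le
  have hH0 : H 0 = 0 := by simp [H, diskToHalfPlane_zero, halfPlaneToDisk_self]
  have hSchwarz := Complex.norm_le_norm_of_mapsTo_ball hHd hHmaps hH0
    (norm_halfPlaneToDisk_lt_one hw₀ hw)
  simp only [H, Function.comp_apply, diskToHalfPlane_halfPlaneToDisk hw₀ hw] at hSchwarz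
  simp only [halfPlaneToDisk, norm_div] at hSchwarz
  rwa [div_le_div_iff₀ (norm_pos_iff.mpr (sub_conj_ne_zero_of_im_pos (hmaps hw) hFw₀))
    (norm_pos_iff.mpr (sub_conj_ne_zero_of_im_pos hw hw₀))] at hSchwarz

theorem norm_le_div_mul_norm_of_mapsTo_upperHalfPlane {F : ℂ → ℂ}
    (hF : DifferentiableOn ℂ F upperHalfPlaneSet)
    (hmaps : MapsTo F upperHalfPlaneSet upperHalfPlaneSet) (a : ℝ) {b η : ℝ} (hb : 0 < b)
    (hbη : b ≤ η) :
    ‖F (a + b * I)‖ ≤ η / b * ‖F (a + η * I)‖ := by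
  set q := F (a + b * I)
  set p := F (a + η * I)
  have hPick := norm_sub_mul_le_of_mapsTo_upperHalfPlane hF hmaps
    (w₀ := a + η * I) (w := a + b * I) (by simpa using hb.trans_le hbη) (by simpa using hb)
  have hnum : ‖(a + b * I : ℂ) - (a + η * I)‖ = η - b := by
    rw [add_sub_add_left_eq_sub, ← sub_mul, ← ofReal_sub, norm_mul, norm_I, mul_one, norm_real,
      Real.norm_of_nonpos (by linarith)]
    ring
  have hden : ‖(a + b * I : ℂ) - conj (a + η * I)‖ = η + b := by
    have : (a + b * I : ℂ) - conj (a + η * I) = ((b + η : ℝ) : ℂ) * I := by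
      simp only [map_add, map_mul, conj_ofReal, conj_I]; push_cast; ring
    rw [this, norm_mul, norm_I, mul_one, norm_real, Real.norm_of_nonneg (by linarith)]
    ring
  have hconj : ‖q - conj p‖ ≤ ‖q‖ + ‖p‖ :=
    (norm_sub_le _ _).trans_eq (by rw [norm_conj])
  have hrev : ‖q‖ - ‖p‖ ≤ ‖q - p‖ := norm_sub_norm_le q p
  rw [hnum, hden] at hPick
  rw [div_mul_eq_mul_div, le_div_iff₀ hb]
  nlinarith [mul_le_mul_of_nonneg_left hconj (sub_nonneg.mpr hbη)]

/-- If `Y` is holomorphic on the open upper half-plane with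
`Im Y ≥ 0` there, then for `0 < b ≤ η` one has
`|Y(a + ib)| ≤ (η/b) · |Y(a + iη)|`. -/
theorem stmt_2
    (Y : ℂ → ℂ)
    (hol : DifferentiableOn ℂ Y {w : ℂ | 0 < w.im})
    (him : ∀ w : ℂ, 0 < w.im → 0 ≤ (Y w).im)
    (a b η : ℝ) (hb : 0 < b) (hbη : b ≤ η) :
    ‖Y ((a : ℂ) + b * Complex.I)‖
      ≤ (η / b) * ‖Y ((a : ℂ) + η * Complex.I)‖ := by
  have hshifted : ∀ ε : ℝ, 0 < ε →
      ‖Y (a + b * I) + ε * I‖ ≤ η / b * ‖Y (a + η * I) + ε * I‖ := fun ε hε =>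
    norm_le_div_mul_norm_of_mapsTo_upperHalfPlane (F := fun w => Y w + ε * I)
      (hol.add_const _) (fun w hw => by simpa using add_pos_of_nonneg_of_pos (him w hw) hε)
      a hb hbη
  have hlim (z : ℂ) : Tendsto (fun ε : ℝ => ‖z + ε * I‖) (𝓝[>] 0) (𝓝 ‖z‖) := by
    have hcont : Continuous fun ε : ℝ => ‖z + ε * I‖ := by fun_prop
    simpa using (hcont.tendsto 0).mono_left nhdsWithin_le_nhds
  exact le_of_tendsto_of_tendsto (hlim _) ((hlim _).const_mul _)
    (eventually_nhdsWithin_of_forall hshifted)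
end

section
/- For every B ≥ 1 there exists C > 0, depending only on B, with the following property. Let x, a : ℕ → ℝ satisfy |x_{i−1} + (3πi/2)^{2/3}| ≤ B and |a_{i−1} + (3πi/2)^{2/3}| ≤ B for all i ≥ 1. Then for every w ∈ ℂ with |arg w| < 3π/4 and |w| > 2B, the series ∑_{i∈ℕ} (1/(x_i − w) − 1/(a_i − w)) converges absolutely and its sum has modulus at most C · |w|^{−1/2}. -/
/-!
In the sector `|arg w| ≤ 3π/4` a real point `t ≤ ‖w‖/2` satisfies `t² + ‖w‖² ≤ 5‖t - w‖²`.
Since `xₙ` lies within `B` of `-(3π(n+1)/2)^{2/3}`, this gives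
`‖xₙ - w‖² ≳ (n+1)^{4/3} + ‖w‖²`, and the same for `aₙ`; as `|xₙ - aₙ| ≤ 2B`, the `n`-th term is
`O(B / ((n+1)^{4/3} + ‖w‖²))`. Splitting the sum at `N ≈ ‖w‖^{3/2}`, the first `N` terms are
`O(‖w‖^{-2})` each, and the tail is bounded by `∑_{n ≥ N} n^{-4/3} = O(N^{-1/3})`; both parts
are `O(‖w‖^{-1/2})`.
-/

open Real Filter Topology

lemma Complex.norm_mul_cos_le_re {w : ℂ} {θ : ℝ} (hw : |w.arg| ≤ θ) (hθ : θ ≤ π) :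
    ‖w‖ * Real.cos θ ≤ w.re := by
  rw [← Complex.norm_mul_cos_arg, ← Real.cos_abs w.arg]
  exact mul_le_mul_of_nonneg_left
    (cos_le_cos_of_nonneg_of_le_pi (abs_nonneg _) hθ hw) (norm_nonneg w)

lemma neg_four_fifths_le_cos_three_pi_div_four : -(4 / 5) ≤ cos (3 * π / 4) := by
  rw [show 3 * π / 4 = π - π / 4 by ring, cos_pi_sub, cos_pi_div_four]
  have : √2 ≤ 8 / 5 := (sqrt_le_left (by norm_num)).2 (by norm_num)
  linarith

lemma sq_add_sq_le_five_mul_norm_ofReal_sub_sq {w : ℂ} {t : ℝ}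
    (hw : -(4 / 5) * ‖w‖ ≤ w.re) (ht : 2 * t ≤ ‖w‖) :
    t ^ 2 + ‖w‖ ^ 2 ≤ 5 * ‖(t : ℂ) - w‖ ^ 2 := by
  have hsq : ‖(t : ℂ) - w‖ ^ 2 = t ^ 2 - 2 * t * w.re + ‖w‖ ^ 2 := by
    rw [Complex.sq_norm, Complex.sq_norm, Complex.normSq_apply, Complex.normSq_apply]
    simp only [Complex.sub_re, Complex.sub_im, Complex.ofReal_re, Complex.ofReal_im]
    ring
  rw [hsq]
  rcases le_or_gt t 0 with ht0 | ht0
  · nlinarith [mul_le_mul_of_nonneg_left hw (neg_nonneg.2 ht0), sq_nonneg (t + ‖w‖)]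
  · nlinarith [mul_le_mul_of_nonneg_left (Complex.re_le_norm w) ht0.le,
      mul_nonneg (by linarith : 0 ≤ ‖w‖ - 2 * t) (by linarith : 0 ≤ 2 * ‖w‖ - t)]

lemma sq_add_sq_le_ten_mul_norm_ofReal_sub_sq {w : ℂ} {y c s B : ℝ}
    (hw : -(4 / 5) * ‖w‖ ≤ w.re) (hB : 2 * B < ‖w‖) (hy : |y + c| ≤ B)
    (hs : 0 ≤ s) (hsc : s ≤ c) :
    s ^ 2 + ‖w‖ ^ 2 ≤ 10 * ‖(y : ℂ) - w‖ ^ 2 := by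
  obtain ⟨hlo, hhi⟩ := abs_le.1 hy
  have hB0 : 0 ≤ B := (abs_nonneg _).trans hy
  have hfive := sq_add_sq_le_five_mul_norm_ofReal_sub_sq (t := y) hw (by linarith)
  nlinarith [pow_le_pow_left₀ hs (by linarith : s ≤ B - y) 2, sq_nonneg (B + y),
    mul_le_mul hB.le hB.le (by linarith) (norm_nonneg w)]

lemma norm_inv_sub_inv_le {𝕜 : Type*} [NormedField 𝕜] {u v : 𝕜} {P : ℝ} (hP : 0 < P)
    (hu : P ≤ ‖u‖ ^ 2) (hv : P ≤ ‖v‖ ^ 2) :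
    ‖u⁻¹ - v⁻¹‖ ≤ ‖v - u‖ / P := by
  have hu0 : u ≠ 0 := norm_pos_iff.1 (by nlinarith [norm_nonneg u])
  have hv0 : v ≠ 0 := norm_pos_iff.1 (by nlinarith [norm_nonneg v])
  have huv : P ≤ ‖u‖ * ‖v‖ := by
    rw [← pow_le_pow_iff_left₀ hP.le (by positivity) two_ne_zero, mul_pow]
    nlinarith
  rw [inv_sub_inv hu0 hv0, norm_div, norm_mul]
  exact div_le_div_of_nonneg_left (norm_nonneg _) hP huv

lemma summable_and_tsum_le_of_le_sub_succ {f g : ℕ → ℝ} (hg : ∀ n, 0 ≤ g n)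
    (hgf : ∀ n, g n ≤ f n - f (n + 1)) (hf : Tendsto f atTop (𝓝 0)) :
    Summable g ∧ ∑' n, g n ≤ f 0 := by
  have htel : HasSum (fun n ↦ f n - f (n + 1)) (f 0) := by
    rw [hasSum_iff_tendsto_nat_of_nonneg fun n ↦ (hg n).trans (hgf n)]
    simp only [Finset.sum_range_sub']
    simpa using hf.const_sub (f 0)
  have hsum : Summable g := htel.summable.of_nonneg_of_le hg hgf
  exact ⟨hsum, (hsum.tsum_le_tsum hgf htel.summable).trans htel.tsum_eq.le⟩

lemma add_one_rpow_neg_four_thirds_le {t : ℝ} (ht : 0 < t) :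
    (t + 1) ^ (-(4 / 3) : ℝ) ≤ 3 * (t ^ (-(1 / 3) : ℝ) - (t + 1) ^ (-(1 / 3) : ℝ)) := by
  have ht1 : 0 ≤ t + 1 := by linarith
  set a := t ^ (1 / 3 : ℝ)
  set b := (t + 1) ^ (1 / 3 : ℝ)
  have ha : 0 < a := rpow_pos_of_pos ht _
  have hab : a ≤ b := rpow_le_rpow ht.le (by linarith) (by norm_num)
  have hcube : b ^ 3 = a ^ 3 + 1 := by
    simp only [a, b, ← rpow_natCast, ← rpow_mul ht.le, ← rpow_mul ht1]
    norm_num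
  have hb4 : (t + 1) ^ (-(4 / 3) : ℝ) = (b ^ 4)⁻¹ := by
    rw [rpow_neg ht1, show (4 / 3 : ℝ) = 1 / 3 * (4 : ℕ) by norm_num, rpow_mul ht1, rpow_natCast]
  rw [hb4, rpow_neg ht.le, rpow_neg ht1, inv_sub_inv ha.ne' (ha.trans_le hab).ne', inv_eq_one_div,
    mul_div_assoc', div_le_div_iff₀ (by positivity) (by positivity)]
  -- `b³ - a³ = (b - a)(a² + ab + b²) ≤ 3b²(b - a)`
  have hgap : 1 ≤ 3 * b ^ 2 * (b - a) := by
    nlinarith [mul_nonneg (sq_nonneg (b - a)) (by linarith : 0 ≤ 2 * b + a)]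
  nlinarith [mul_le_mul_of_nonneg_left hgap (sq_nonneg b), mul_le_mul_of_nonneg_right hab ha.le]

lemma tsum_add_add_one_rpow_neg_four_thirds_le {N : ℝ} (hN : 0 < N) :
    Summable (fun i : ℕ ↦ ((i : ℝ) + N + 1) ^ (-(4 / 3) : ℝ)) ∧
      ∑' i : ℕ, ((i : ℝ) + N + 1) ^ (-(4 / 3) : ℝ) ≤ 3 * N ^ (-(1 / 3) : ℝ) := by
  have hpos (i : ℕ) : 0 < (i : ℝ) + N := by positivity
  have key := summable_and_tsum_le_of_le_sub_succ
    (f := fun i : ℕ ↦ 3 * ((i : ℝ) + N) ^ (-(1 / 3) : ℝ))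
    (g := fun i : ℕ ↦ ((i : ℝ) + N + 1) ^ (-(4 / 3) : ℝ))
    (fun i ↦ rpow_nonneg (by linarith [hpos i]) _)
    (fun i ↦ by
      have := add_one_rpow_neg_four_thirds_le (hpos i)
      push_cast
      rw [add_right_comm (i : ℝ) 1 N]
      linarith)
    (by
      simpa using ((tendsto_rpow_neg_atTop (by norm_num : (0 : ℝ) < 1 / 3)).comp
        (tendsto_atTop_add_const_right _ N tendsto_natCast_atTop_atTop)).const_mul 3)
  simpa using key

lemma tsum_inv_add_one_rpow_four_thirds_add_sq_le {r : ℝ} (hr : 1 ≤ r) :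
    Summable (fun n : ℕ ↦ (((n : ℝ) + 1) ^ (4 / 3 : ℝ) + r ^ 2)⁻¹) ∧
      ∑' n : ℕ, (((n : ℝ) + 1) ^ (4 / 3 : ℝ) + r ^ 2)⁻¹ ≤ 5 * r ^ (-(1 / 2) : ℝ) := by
  set h : ℕ → ℝ := fun n ↦ (((n : ℝ) + 1) ^ (4 / 3 : ℝ) + r ^ 2)⁻¹
  have hr0 : 0 < r := by linarith
  -- split at `N ≈ r ^ (3/2)`, where `(n + 1) ^ (4/3)` overtakes `r ^ 2`
  set N : ℕ := ⌈r ^ (3 / 2 : ℝ)⌉₊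
  have hR : 1 ≤ r ^ (3 / 2 : ℝ) := one_le_rpow hr (by norm_num)
  have hNge : r ^ (3 / 2 : ℝ) ≤ N := Nat.le_ceil _
  have hNle : (N : ℝ) ≤ r ^ (3 / 2 : ℝ) + 1 := (Nat.ceil_lt_add_one (by positivity)).le
  have hN0 : (0 : ℝ) < N := by linarith
  obtain ⟨hsum_tail, htail⟩ := tsum_add_add_one_rpow_neg_four_thirds_le hN0
  have hh_tail (i : ℕ) : h (i + N) ≤ ((i : ℝ) + N + 1) ^ (-(4 / 3) : ℝ) := by
    rw [rpow_neg (by positivity)]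
    simp only [h]
    push_cast
    exact inv_anti₀ (by positivity) (le_add_of_nonneg_right (sq_nonneg r))
  have hsum : Summable h := (summable_nat_add_iff N).1
    (hsum_tail.of_nonneg_of_le (fun _ ↦ by positivity) hh_tail)
  refine ⟨hsum, ?_⟩
  have hhead : ∑ i ∈ Finset.range N, h i ≤ 2 * r ^ (-(1 / 2) : ℝ) := calc
    ∑ i ∈ Finset.range N, h i ≤ N * (r ^ 2)⁻¹ := by
      simpa using Finset.sum_le_card_nsmul (Finset.range N) h (r ^ 2)⁻¹ fun i _ ↦
        inv_anti₀ (by positivity) (le_add_of_nonneg_left (by positivity))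
    _ ≤ 2 * r ^ (3 / 2 : ℝ) * (r ^ 2)⁻¹ := by gcongr; linarith
    _ = 2 * r ^ (-(1 / 2) : ℝ) := by
      rw [← rpow_natCast, ← rpow_neg hr0.le, mul_assoc, ← rpow_add hr0]
      norm_num
  have htail' : ∑' i, h (i + N) ≤ 3 * r ^ (-(1 / 2) : ℝ) := calc
    ∑' i, h (i + N) ≤ ∑' i : ℕ, ((i : ℝ) + N + 1) ^ (-(4 / 3) : ℝ) :=
      ((summable_nat_add_iff N).2 hsum).tsum_le_tsum hh_tail hsum_tail
    _ ≤ 3 * (N : ℝ) ^ (-(1 / 3) : ℝ) := htail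
    _ ≤ 3 * (r ^ (3 / 2 : ℝ)) ^ (-(1 / 3) : ℝ) :=
      mul_le_mul_of_nonneg_left (rpow_le_rpow_of_nonpos (by positivity) hNge (by norm_num))
        (by norm_num)
    _ = 3 * r ^ (-(1 / 2) : ℝ) := by
      rw [← rpow_mul hr0.le]
      norm_num
  rw [← hsum.sum_add_tsum_nat_add N]
  linarith

lemma rpow_four_thirds_add_sq_le_ten_mul_norm_sub_sq {w : ℂ} {y t B : ℝ}
    (hw : -(4 / 5) * ‖w‖ ≤ w.re) (hB : 2 * B < ‖w‖) (ht : 0 ≤ t)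
    (hy : |y + (3 * π * t / 2) ^ ((2 : ℝ) / 3)| ≤ B) :
    t ^ (4 / 3 : ℝ) + ‖w‖ ^ 2 ≤ 10 * ‖(y : ℂ) - w‖ ^ 2 := by
  have hst : t ^ ((2 : ℝ) / 3) ≤ (3 * π * t / 2) ^ ((2 : ℝ) / 3) :=
    rpow_le_rpow ht (by nlinarith [pi_gt_three]) (by norm_num)
  rw [show (4 / 3 : ℝ) = 2 / 3 * (2 : ℕ) by norm_num, rpow_mul ht, rpow_natCast]
  exact sq_add_sq_le_ten_mul_norm_ofReal_sub_sq hw hB hy (by positivity) hst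

/-- Comparison estimate (2.14)–(2.15): if both `x` and `a` stay
within `B` of the reference points `−(3πi/2)^{2/3}`, then for `|arg w| < 3π/4`,
`|w| > 2B`, the series `∑ᵢ (1/(xᵢ − w) − 1/(aᵢ − w))` converges absolutely and its
sum has modulus at most `C·|w|^{−1/2}`, with `C` depending only on `B`. -/
theorem stmt_6 (B : ℝ) (hB : 1 ≤ B) :
    ∃ C : ℝ, 0 < C ∧
      ∀ x a : ℕ → ℝ,
        (∀ i : ℕ, 1 ≤ i →
          |x (i - 1) + (3 * Real.pi * i / 2) ^ ((2 : ℝ) / 3)| ≤ B) →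
        (∀ i : ℕ, 1 ≤ i →
          |a (i - 1) + (3 * Real.pi * i / 2) ^ ((2 : ℝ) / 3)| ≤ B) →
        ∀ w : ℂ, |Complex.arg w| < 3 * Real.pi / 4 → 2 * B < ‖w‖ →
          Summable (fun i : ℕ =>
            ‖((x i : ℂ) - w)⁻¹ - ((a i : ℂ) - w)⁻¹‖) ∧
          ‖∑' i : ℕ, (((x i : ℂ) - w)⁻¹ - ((a i : ℂ) - w)⁻¹)‖
            ≤ C * ‖w‖ ^ (-(1/2) : ℝ) := by
  refine ⟨100 * B, by positivity, fun x a hx ha w harg hw ↦ ?_⟩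
  have hre : -(4 / 5) * ‖w‖ ≤ w.re := by
    nlinarith [Complex.norm_mul_cos_le_re harg.le (by linarith [pi_pos]),
      neg_four_fifths_le_cos_three_pi_div_four, norm_nonneg w]
  set P : ℕ → ℝ := fun n ↦ ((n : ℝ) + 1) ^ (4 / 3 : ℝ) + ‖w‖ ^ 2
  have hlow (y : ℕ → ℝ)
      (hy : ∀ i : ℕ, 1 ≤ i → |y (i - 1) + (3 * π * i / 2) ^ ((2 : ℝ) / 3)| ≤ B) (n : ℕ) :
      P n / 10 ≤ ‖(y n : ℂ) - w‖ ^ 2 := by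
    have := rpow_four_thirds_add_sq_le_ten_mul_norm_sub_sq hre hw (Nat.cast_nonneg (n + 1))
      (hy (n + 1) n.succ_pos)
    push_cast at this
    linarith
  have hterm (n : ℕ) : ‖((x n : ℂ) - w)⁻¹ - ((a n : ℂ) - w)⁻¹‖ ≤ 20 * B * (P n)⁻¹ := by
    have hgap : ‖((a n : ℂ) - w) - ((x n : ℂ) - w)‖ ≤ 2 * B := by
      rw [sub_sub_sub_cancel_right, ← Complex.ofReal_sub, Complex.norm_real, Real.norm_eq_abs]
      have hxn := abs_le.1 (hx (n + 1) n.succ_pos)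
      have han := abs_le.1 (ha (n + 1) n.succ_pos)
      rw [Nat.add_sub_cancel] at hxn han
      exact abs_le.2 ⟨by linarith [hxn.2, han.1], by linarith [hxn.1, han.2]⟩
    calc _ ≤ _ / (P n / 10) := norm_inv_sub_inv_le (by positivity) (hlow x hx n) (hlow a ha n)
      _ ≤ 2 * B / (P n / 10) := by gcongr
      _ = 20 * B * (P n)⁻¹ := by field_simp; ring
  obtain ⟨hPsum, hPle⟩ := tsum_inv_add_one_rpow_four_thirds_add_sq_le (r := ‖w‖) (by linarith)
  have hnorm : Summable fun n ↦ ‖((x n : ℂ) - w)⁻¹ - ((a n : ℂ) - w)⁻¹‖ :=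
    (hPsum.mul_left (20 * B)).of_nonneg_of_le (fun _ ↦ norm_nonneg _) hterm
  refine ⟨hnorm, ?_⟩
  calc _ ≤ ∑' n, ‖((x n : ℂ) - w)⁻¹ - ((a n : ℂ) - w)⁻¹‖ := norm_tsum_le_tsum_norm hnorm
    _ ≤ ∑' n, 20 * B * (P n)⁻¹ := hnorm.tsum_le_tsum hterm (hPsum.mul_left _)
    _ ≤ 20 * B * (5 * ‖w‖ ^ (-(1 / 2) : ℝ)) := by
      rw [tsum_mul_left]
      gcongr
    _ = 100 * B * ‖w‖ ^ (-(1 / 2) : ℝ) := by ring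
end

section
/- Let Y_n (n ∈ ℕ) and Y be Nevanlinna functions on ℍ with representations (b_n, c_n, μ_n) and (b, c, μ) respectively. If Y_n → Y uniformly on every compact subset of ℍ, then μ_n → μ vaguely, i.e. ∫_ℝ f dμ_n → ∫_ℝ f dμ for every smooth, compactly supported f : ℝ → ℝ. -/
open MeasureTheory Filter Set Real

noncomputable section Stmt8Aux

/-- Poisson kernel. -/
def PK (y x t : ℝ) : ℝ := y / ((x - t)^2 + y^2)

lemma PK_nonneg {y : ℝ} (hy : 0 < y) (x t : ℝ) : 0 ≤ PK y x t := by
  unfold PK; positivity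

lemma PK_symm (y x t : ℝ) : PK y x t = PK y t x := by
  unfold PK; rw [show (x-t)^2 = (t-x)^2 by ring]

lemma PK_cont {y : ℝ} (hy : 0 < y) : Continuous (fun p : ℝ × ℝ => PK y p.1 p.2) := by
  unfold PK
  apply continuous_const.div (by fun_prop)
  intro p
  positivity

lemma sigmaFinite_of_int {μ : Measure ℝ} (h : Integrable (fun l : ℝ => 1/(1+l^2)) μ) :
    SigmaFinite μ := by
  refine ⟨⟨⟨fun n => Icc (-(n:ℝ)) n, fun _ => trivial, fun n => ?_, ?_⟩⟩⟩
  · have hsub : Icc (-(n:ℝ)) n ⊆ {x : ℝ | 1/(1+(n:ℝ)^2) ≤ 1/(1+x^2)} := by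
      intro x hx
      simp only [mem_setOf_eq]
      have h1 : x^2 ≤ (n:ℝ)^2 := sq_le_sq' hx.1 hx.2
      exact one_div_le_one_div_of_le (by positivity) (by linarith)
    exact lt_of_le_of_lt (measure_mono hsub) (h.measure_ge_lt_top (by positivity))
  · apply eq_univ_iff_forall.2
    intro x
    obtain ⟨n, hn⟩ := exists_nat_ge |x|
    exact mem_iUnion.2 ⟨n, abs_le.1 hn |>.1, abs_le.1 hn |>.2⟩

lemma cauchy_integrable {c : ℝ} (hc : 0 < c) : Integrable (fun u : ℝ => c / (u^2 + c^2)) := by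
  have heq : (fun u : ℝ => c / (u^2 + c^2)) = fun u : ℝ => c⁻¹ * (1 + (u * c⁻¹)^2)⁻¹ := by
    funext u
    field_simp
    ring
  rw [heq]
  exact ((integrable_comp_mul_right_iff (fun v : ℝ => (1+v^2)⁻¹)
    (inv_ne_zero hc.ne')).2 integrable_inv_one_add_sq).const_mul _

lemma cauchy_integral {c : ℝ} (hc : 0 < c) : (∫ u : ℝ, c / (u^2 + c^2)) = π := by
  have heq : (fun u : ℝ => c / (u^2 + c^2)) = fun u : ℝ => c⁻¹ * (1 + (u / c)^2)⁻¹ := by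
    funext u
    field_simp
    ring
  rw [heq, integral_const_mul, MeasureTheory.Measure.integral_comp_div
    (fun v : ℝ => (1+v^2)⁻¹) c, integral_univ_inv_one_add_sq, abs_of_pos hc, smul_eq_mul]
  field_simp

lemma PK_integrable {y : ℝ} (hy : 0 < y) (t : ℝ) : Integrable (fun x => PK y x t) := by
  unfold PK
  exact (cauchy_integrable hy).comp_sub_right t

lemma PK_integral {y : ℝ} (hy : 0 < y) (t : ℝ) : (∫ x : ℝ, PK y x t) = π := by
  unfold PK
  rw [show (fun x : ℝ => y / ((x - t)^2 + y^2)) = fun x : ℝ => (fun u : ℝ => y/(u^2+y^2)) (x - t) from rfl]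
  rw [integral_sub_right_eq_self (fun u : ℝ => y/(u^2+y^2)) t]
  exact cauchy_integral hy
lemma denom_ne_zero (l : ℝ) : (1 + (l:ℂ)^2) ≠ 0 := by
  have : ((1 + l^2 : ℝ) : ℂ) = 1 + (l:ℂ)^2 := by push_cast; ring
  rw [← this]
  exact_mod_cast (by positivity : (1+l^2:ℝ) ≠ 0)

lemma shift_ne_zero {w : ℂ} (hw : 0 < w.im) (l : ℝ) : ((l:ℂ) - w) ≠ 0 := by
  intro h
  have : ((l:ℂ) - w).im = 0 := by rw [h]; simp
  simp [Complex.sub_im] at this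
  linarith

lemma nevanlinna_integrand_eq {w : ℂ} (hw : 0 < w.im) (l : ℝ) :
    ((l : ℂ) - w)⁻¹ - (l : ℂ) / (1 + (l : ℂ)^2)
      = (1 + (l:ℂ)*w) / (((l:ℂ) - w) * (1 + (l:ℂ)^2)) := by
  field_simp [shift_ne_zero hw l, denom_ne_zero l]
  ring

lemma norm_nevanlinna_integrand_le {w : ℂ} (hw : 0 < w.im) (l : ℝ) :
    ‖((l : ℂ) - w)⁻¹ - (l : ℂ) / (1 + (l : ℂ)^2)‖
      ≤ (‖w‖ + (1 + ‖w‖^2)/w.im) * (1/(1+l^2)) := by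
  rw [nevanlinna_integrand_eq hw l]
  rw [norm_div, norm_mul]
  have h1 : ‖(1 + (l:ℂ)^2)‖ = 1 + l^2 := by
    have : ((1 + l^2 : ℝ) : ℂ) = 1 + (l:ℂ)^2 := by push_cast; ring
    rw [← this, Complex.norm_real, Real.norm_eq_abs, abs_of_pos (by positivity)]
  rw [h1]
  set A := ‖((l:ℂ) - w)‖ with hA
  set aw := ‖w‖ with haw
  have hApos : w.im ≤ A := by
    calc w.im = |((l:ℂ) - w).im| := by rw [Complex.sub_im]; simp [abs_of_pos hw]
    _ ≤ A := Complex.abs_im_le_norm _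
  have hA0 : 0 < A := lt_of_lt_of_le hw hApos
  have hl : |l| ≤ A + aw := by
    calc |l| = ‖((l:ℂ))‖ := by rw [Complex.norm_real, Real.norm_eq_abs]
    _ = ‖(((l:ℂ) - w) + w)‖ := by ring_nf
    _ ≤ A + aw := norm_add_le _ _
  have hnum : ‖(1 + (l:ℂ)*w)‖ ≤ 1 + |l| * aw := by
    calc ‖(1 + (l:ℂ)*w)‖ ≤ ‖(1:ℂ)‖ + ‖((l:ℂ)*w)‖ :=
      norm_add_le _ _
    _ = 1 + |l| * aw := by rw [norm_one, norm_mul, Complex.norm_real, Real.norm_eq_abs]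
  have haw0 : 0 ≤ aw := norm_nonneg w
  have hkey : 1 + |l| * aw ≤ (aw + (1 + aw^2)/w.im) * A := by
    have h2 : 1 + |l| * aw ≤ 1 + (A + aw) * aw := by nlinarith [abs_nonneg l]
    have h3 : (1 + aw^2) ≤ (1 + aw^2)/w.im * A := by
      rw [div_mul_eq_mul_div, le_div_iff₀ hw]
      nlinarith
    nlinarith
  rw [mul_one_div, div_le_div_iff₀ (by positivity) (by positivity)]
  have hfin : ‖(1 + (l:ℂ)*w)‖ ≤ (aw + (1 + aw^2)/w.im) * A := hnum.trans hkey
  calc ‖(1 + (l:ℂ)*w)‖ * (1 + l^2) ≤ ((aw + (1 + aw^2)/w.im) * A) * (1+l^2) := by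
        nlinarith [sq_nonneg l]
  _ = (aw + (1 + aw^2)/w.im) * (A * (1+l^2)) := by ring

lemma nevanlinna_integrand_continuous {w : ℂ} (hw : 0 < w.im) :
    Continuous (fun l : ℝ => ((l : ℂ) - w)⁻¹ - (l : ℂ) / (1 + (l : ℂ)^2)) := by
  apply Continuous.sub
  · exact (Continuous.inv₀ (by fun_prop) (fun l => shift_ne_zero hw l))
  · exact Continuous.div (by fun_prop) (by fun_prop) (fun l => denom_ne_zero l)

lemma nevanlinna_integrand_integrable {μ : Measure ℝ}
    (hμ : Integrable (fun l : ℝ => 1/(1+l^2)) μ) {w : ℂ} (hw : 0 < w.im) :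
    Integrable (fun l : ℝ => ((l : ℂ) - w)⁻¹ - (l : ℂ) / (1 + (l : ℂ)^2)) μ := by
  apply Integrable.mono' (hμ.const_mul (‖w‖ + (1 + ‖w‖^2)/w.im))
  · exact (nevanlinna_integrand_continuous hw).aestronglyMeasurable
  · exact Filter.Eventually.of_forall (fun l => norm_nevanlinna_integrand_le hw l)

lemma im_nevanlinna_integrand (w : ℂ) (l : ℝ) :
    (((l : ℂ) - w)⁻¹ - (l : ℂ) / (1 + (l : ℂ)^2)).im = PK w.im l w.re := by
  have h2 : (l:ℂ) / (1 + (l:ℂ)^2) = ((l/(1+l^2) : ℝ) : ℂ) := by push_cast; ring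
  rw [Complex.sub_im, h2, Complex.ofReal_im, Complex.inv_im]
  unfold PK
  rw [Complex.normSq_apply, Complex.sub_re, Complex.sub_im, Complex.ofReal_re, Complex.ofReal_im]
  ring

end Stmt8Aux

section Aux3
lemma imY {Yf : ℂ → ℂ} (bb cc : ℝ) {μ : Measure ℝ}
    (hμi : Integrable (fun l : ℝ => 1/(1+l^2)) μ)
    (hdef : ∀ w : ℂ, 0 < w.im → Yf w = (bb:ℂ) + (cc:ℂ)*w
      + ∫ l : ℝ, (((l:ℂ)-w)⁻¹ - (l:ℂ)/(1+(l:ℂ)^2)) ∂μ)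
    {w : ℂ} (hw : 0 < w.im) :
    (Yf w).im = cc * w.im + ∫ l, PK w.im l w.re ∂μ := by
  rw [hdef w hw, Complex.add_im, Complex.add_im, Complex.mul_im, Complex.ofReal_im,
    Complex.ofReal_re, Complex.ofReal_im]
  have h : (∫ l : ℝ, ((((l:ℂ)-w)⁻¹ - (l:ℂ)/(1+(l:ℂ)^2)).im) ∂μ)
      = (∫ l : ℝ, (((l:ℂ)-w)⁻¹ - (l:ℂ)/(1+(l:ℂ)^2)) ∂μ).im := by
    simpa [Complex.imCLM_apply] using
      Complex.imCLM.integral_comp_comm (nevanlinna_integrand_integrable hμi hw)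
  rw [← h]
  simp only [im_nevanlinna_integrand]
  ring
end Aux3

section Aux4

lemma PK_cont_x {y : ℝ} (hy : 0 < y) (t : ℝ) : Continuous (fun x => PK y x t) :=
  (PK_cont hy).comp (continuous_id.prodMk continuous_const)

lemma PK_cont_t {y : ℝ} (hy : 0 < y) (x : ℝ) : Continuous (fun t => PK y x t) :=
  (PK_cont hy).comp (continuous_const.prodMk continuous_id)

lemma fPK_integrable {f : ℝ → ℝ} {F : ℝ} (hfc : Continuous f) (hF : ∀ x, |f x| ≤ F)
    {y : ℝ} (hy : 0 < y) (t : ℝ) :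
    Integrable (fun x => f x * PK y x t) := by
  apply Integrable.mono' ((PK_integrable hy t).const_mul F)
  · exact (hfc.mul (PK_cont_x hy t)).aestronglyMeasurable
  · apply Filter.Eventually.of_forall
    intro x
    rw [Real.norm_eq_abs, abs_mul, abs_of_nonneg (PK_nonneg hy x t)]
    exact mul_le_mul_of_nonneg_right (hF x) (PK_nonneg hy x t)

lemma intf_le {f : ℝ → ℝ} {F R : ℝ} (hfi : Integrable f) (hF : ∀ x, |f x| ≤ F)
    (hsupp : ∀ x, R ≤ |x| → f x = 0) (hR : 1 ≤ R) :
    (∫ x, |f x|) ≤ 2 * R * F := by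
  have hF0 : 0 ≤ F := le_trans (abs_nonneg _) (hF 0)
  have h1 : (∫ x, |f x|) ≤ ∫ x, (Icc (-R) R).indicator (fun _ => F) x := by
    apply integral_mono hfi.abs
    · exact (integrable_indicator_iff measurableSet_Icc).2
        ((integrableOn_const_iff enorm_ne_top).2 (Or.inr (by rw [Real.volume_Icc]; exact ENNReal.ofReal_lt_top)))
    · intro x
      by_cases hx : x ∈ Icc (-R) R
      · rw [indicator_of_mem hx]; exact hF x
      · rw [indicator_of_notMem hx]
        have hz : f x = 0 := by
          apply hsupp x
          rcases not_and_or.1 hx with h | h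
          · push_neg at h; rw [abs_of_neg (by linarith)]; linarith
          · push_neg at h; rw [abs_of_pos (by linarith)]; linarith
        simp [hz]
  calc (∫ x, |f x|) ≤ ∫ x, (Icc (-R) R).indicator (fun _ => F) x := h1
  _ = (volume (Icc (-R) R)).toReal • F := integral_indicator_const F measurableSet_Icc
  _ = 2 * R * F := by
      rw [Real.volume_Icc, ENNReal.toReal_ofReal (by linarith), smul_eq_mul]; ring

set_option maxHeartbeats 1000000 in
lemma kernel_approx {f : ℝ → ℝ} {L F R : ℝ} (hfc : Continuous f) (hfi : Integrable f)
    (hF : ∀ x, |f x| ≤ F) (hL : ∀ x z, |f x - f z| ≤ L * |x - z|) (hL0 : 0 ≤ L)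
    (hR : 1 ≤ R) (hsupp : ∀ x, R ≤ |x| → f x = 0)
    {y : ℝ} (hy : 0 < y) (hy1 : y ≤ 1) (t : ℝ) :
    |(∫ x, f x * PK y x t) - π * f t|
      ≤ ((1+(R+1)^2) * (π*L + 4*π*F) + 4*R*F*(R+1)^2) * Real.sqrt y * (1/(1+t^2)) := by
  have hF0 : 0 ≤ F := le_trans (abs_nonneg _) (hF 0)
  set CE := (1+(R+1)^2) * (π*L + 4*π*F) + 4*R*F*(R+1)^2 with hCE
  have hsy : 0 < Real.sqrt y := Real.sqrt_pos.2 hy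
  have hsq : Real.sqrt y * Real.sqrt y = y := Real.mul_self_sqrt hy.le
  have hsy1 : Real.sqrt y ≤ 1 := by
    nlinarith
  have hysy : y ≤ Real.sqrt y := by nlinarith
  by_cases ht : |t| ≤ R + 1
  · -- near case
    have hq : 1 + t^2 ≤ 1 + (R+1)^2 := by nlinarith [sq_abs t, abs_nonneg t]
    have hπf : π * f t = ∫ x, f t * PK y x t := by
      rw [integral_const_mul, PK_integral hy]; ring
    have hdiff : (∫ x, f x * PK y x t) - π * f t = ∫ x, (f x - f t) * PK y x t := by
      rw [hπf, ← integral_sub (fPK_integrable hfc hF hy t)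
        ((PK_integrable hy t).const_mul (f t))]
      congr 1; funext x; ring
    have hshift : (∫ x, (f x - f t) * PK y x t) = ∫ u, (f (u + t) - f t) * PK y u 0 := by
      rw [← integral_add_right_eq_self (fun x => (f x - f t) * PK y x t) t]
      congr 1; funext u
      unfold PK
      ring_nf
    have Gint : Integrable (fun u => (f (u + t) - f t) * PK y u 0) := by
      apply Integrable.mono' ((PK_integrable hy 0).const_mul (2*F))
      · exact (((hfc.comp (continuous_id.add continuous_const)).sub continuous_const).mul
          (PK_cont_x hy 0)).aestronglyMeasurable
      · apply Filter.Eventually.of_forall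
        intro u
        rw [Real.norm_eq_abs, abs_mul, abs_of_nonneg (PK_nonneg hy u 0)]
        apply mul_le_mul_of_nonneg_right _ (PK_nonneg hy u 0)
        calc |f (u+t) - f t| ≤ |f (u+t)| + |f t| := abs_sub _ _
        _ ≤ 2 * F := by have := hF (u+t); have := hF t; linarith
    have habs : |(∫ u, (f (u + t) - f t) * PK y u 0)|
        ≤ ∫ u, |(f (u + t) - f t) * PK y u 0| := by
      have := norm_integral_le_integral_norm (μ := volume)
        (fun u => (f (u + t) - f t) * PK y u 0)
      simpa only [Real.norm_eq_abs] using this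
    set s : Set ℝ := Icc (-Real.sqrt y) (Real.sqrt y) with hs
    have ms : MeasurableSet s := measurableSet_Icc
    have hsplit : (∫ u, |(f (u + t) - f t) * PK y u 0|)
        = (∫ u in s, |(f (u + t) - f t) * PK y u 0|)
          + ∫ u in sᶜ, |(f (u + t) - f t) * PK y u 0| := (integral_add_compl ms Gint.abs).symm
    have hb1 : (∫ u in s, |(f (u + t) - f t) * PK y u 0|) ≤ L * Real.sqrt y * π := by
      have step : (∫ u in s, |(f (u + t) - f t) * PK y u 0|)
          ≤ ∫ u in s, (L * Real.sqrt y) * PK y u 0 := by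
        apply setIntegral_mono_on Gint.abs.integrableOn
          (((PK_integrable hy 0).const_mul _).integrableOn) ms
        intro u hu
        rw [abs_mul, abs_of_nonneg (PK_nonneg hy u 0)]
        apply mul_le_mul_of_nonneg_right _ (PK_nonneg hy u 0)
        calc |f (u+t) - f t| ≤ L * |(u+t) - t| := hL _ _
        _ = L * |u| := by ring_nf
        _ ≤ L * Real.sqrt y := mul_le_mul_of_nonneg_left (abs_le.2 ⟨hu.1, hu.2⟩) hL0
      calc (∫ u in s, |(f (u + t) - f t) * PK y u 0|)
          ≤ ∫ u in s, (L * Real.sqrt y) * PK y u 0 := step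
      _ = (L * Real.sqrt y) * ∫ u in s, PK y u 0 := integral_const_mul _ _
      _ ≤ (L * Real.sqrt y) * π := by
          apply mul_le_mul_of_nonneg_left _ (by positivity)
          rw [← PK_integral hy 0]
          exact setIntegral_le_integral (PK_integrable hy 0)
            (Filter.Eventually.of_forall (fun u => PK_nonneg hy u 0))
      _ = L * Real.sqrt y * π := by ring
    have hb2 : (∫ u in sᶜ, |(f (u + t) - f t) * PK y u 0|) ≤ 4 * F * Real.sqrt y * π := by
      have step : (∫ u in sᶜ, |(f (u + t) - f t) * PK y u 0|)
          ≤ ∫ u in sᶜ, (4 * F * Real.sqrt y) * PK (Real.sqrt y) u 0 := by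
        apply setIntegral_mono_on Gint.abs.integrableOn
          (((PK_integrable hsy 0).const_mul _).integrableOn) ms.compl
        intro u hu
        have hus : u ∉ s := hu
        have hu' : u < -Real.sqrt y ∨ Real.sqrt y < u := by
          by_contra hcon
          push_neg at hcon
          exact hus (mem_Icc.2 ⟨hcon.1, hcon.2⟩)
        have hu2 : y ≤ u^2 := by
          rcases hu' with h | h
          · nlinarith
          · nlinarith
        rw [abs_mul, abs_of_nonneg (PK_nonneg hy u 0)]
        have h1 : |f (u+t) - f t| ≤ 2 * F := by
          calc |f (u+t) - f t| ≤ |f (u+t)| + |f t| := abs_sub _ _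
          _ ≤ 2 * F := by have := hF (u+t); have := hF t; linarith
        have h2 : PK y u 0 ≤ 2 * Real.sqrt y * PK (Real.sqrt y) u 0 := by
          unfold PK
          rw [div_le_iff₀ (by positivity)]
          have expand : 2 * Real.sqrt y * (Real.sqrt y / ((u - 0)^2 + (Real.sqrt y)^2))
              = 2 * y / ((u-0)^2 + y) := by
            rw [Real.sq_sqrt hy.le]
            field_simp
            linear_combination hsq
          rw [expand]
          rw [div_mul_eq_mul_div, le_div_iff₀ (by positivity)]
          nlinarith [sq_nonneg (u - 0), hy.le]
        calc |f (u+t) - f t| * PK y u 0 ≤ (2*F) * (2 * Real.sqrt y * PK (Real.sqrt y) u 0) := by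
              apply mul_le_mul h1 h2 (PK_nonneg hy u 0) (by positivity)
        _ = (4 * F * Real.sqrt y) * PK (Real.sqrt y) u 0 := by ring
      calc (∫ u in sᶜ, |(f (u + t) - f t) * PK y u 0|)
          ≤ ∫ u in sᶜ, (4 * F * Real.sqrt y) * PK (Real.sqrt y) u 0 := step
      _ = (4 * F * Real.sqrt y) * ∫ u in sᶜ, PK (Real.sqrt y) u 0 := integral_const_mul _ _
      _ ≤ (4 * F * Real.sqrt y) * π := by
          apply mul_le_mul_of_nonneg_left _ (by positivity)
          rw [← PK_integral hsy 0]
          exact setIntegral_le_integral (PK_integrable hsy 0)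
            (Filter.Eventually.of_forall (fun u => PK_nonneg hsy u 0))
      _ = 4 * F * Real.sqrt y * π := by ring
    have hD : |(∫ x, f x * PK y x t) - π * f t| ≤ (π*L + 4*π*F) * Real.sqrt y := by
      rw [hdiff, hshift]
      calc |(∫ u, (f (u + t) - f t) * PK y u 0)|
          ≤ ∫ u, |(f (u + t) - f t) * PK y u 0| := habs
      _ = _ + _ := hsplit
      _ ≤ L * Real.sqrt y * π + 4 * F * Real.sqrt y * π := add_le_add hb1 hb2
      _ = (π*L + 4*π*F) * Real.sqrt y := by ring
    calc |(∫ x, f x * PK y x t) - π * f t| ≤ (π*L + 4*π*F) * Real.sqrt y := hD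
    _ ≤ CE * Real.sqrt y * (1/(1+t^2)) := by
        rw [mul_one_div, le_div_iff₀ (by positivity)]
        have hπ : (0:ℝ) < π := Real.pi_pos
        have hBase : (π*L + 4*π*F) * Real.sqrt y * (1+t^2)
            ≤ (π*L + 4*π*F) * Real.sqrt y * (1+(R+1)^2) :=
          mul_le_mul_of_nonneg_left hq (by positivity)
        have hpos : 0 ≤ 4*R*F*(R+1)^2 * Real.sqrt y := by positivity
        calc (π*L + 4*π*F) * Real.sqrt y * (1+t^2)
            ≤ (π*L + 4*π*F) * Real.sqrt y * (1+(R+1)^2) := hBase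
        _ ≤ CE * Real.sqrt y := by rw [hCE]; nlinarith [hpos]
  · -- far case
    push_neg at ht
    have hft : f t = 0 := hsupp t (by linarith)
    rw [hft, mul_zero, sub_zero]
    have hbd : ∀ x, |f x * PK y x t| ≤ |f x| * (2*(R+1)^2*y*(1/(1+t^2))) := by
      intro x
      rw [abs_mul, abs_of_nonneg (PK_nonneg hy x t)]
      by_cases hfx : f x = 0
      · rw [hfx]; simp
      · have hx : |x| < R := by
          by_contra hcon
          exact hfx (hsupp x (le_of_not_gt hcon))
        apply mul_le_mul_of_nonneg_left _ (abs_nonneg _)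
        have ha1 : |t| - R ≤ |x - t| := by
          have := abs_sub_abs_le_abs_sub t x
          rw [abs_sub_comm t x] at this
          linarith
        have ha2 : (0:ℝ) ≤ |t| - R := by linarith
        have ha3 : |t| ≤ (|t| - R) * (R+1) := by nlinarith
        have ha3b : |t| ≤ |x - t| * (R+1) :=
          le_trans ha3 (mul_le_mul_of_nonneg_right ha1 (by linarith))
        have ha4 : t^2 ≤ (x-t)^2 * (R+1)^2 := by
          nlinarith [mul_self_le_mul_self (abs_nonneg t) ha3b, sq_abs t, sq_abs (x-t)]
        have hkey : 1 + t^2 ≤ 2*(R+1)^2*((x-t)^2 + y^2) := by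
          have ht1 : 1 ≤ t^2 := by nlinarith [sq_abs t]
          nlinarith [sq_nonneg y, sq_nonneg (R+1)]
        unfold PK
        rw [mul_one_div, div_le_div_iff₀ (by positivity) (by positivity)]
        calc y * (1+t^2) ≤ y * (2*(R+1)^2*((x-t)^2 + y^2)) :=
              mul_le_mul_of_nonneg_left hkey hy.le
        _ = 2*(R+1)^2*y * ((x-t)^2 + y^2) := by ring
    calc |(∫ x, f x * PK y x t)| ≤ ∫ x, |f x| * (2*(R+1)^2*y*(1/(1+t^2))) := by
          rw [← Real.norm_eq_abs]
          apply norm_integral_le_of_norm_le (hfi.abs.mul_const _)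
          exact Filter.Eventually.of_forall (fun x => by rw [Real.norm_eq_abs]; exact hbd x)
    _ = (∫ x, |f x|) * (2*(R+1)^2*y*(1/(1+t^2))) := integral_mul_const _ _
    _ ≤ (2*R*F) * (2*(R+1)^2*y*(1/(1+t^2))) := by
        apply mul_le_mul_of_nonneg_right (intf_le hfi hF hsupp hR) (by positivity)
    _ = (4*R*F*(R+1)^2) * y * (1/(1+t^2)) := by ring
    _ ≤ CE * Real.sqrt y * (1/(1+t^2)) := by
        have h1 : (4*R*F*(R+1)^2) * y ≤ CE * Real.sqrt y := by
          have hπ : (0:ℝ) < π := Real.pi_pos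
          have base : (4*R*F*(R+1)^2) * y ≤ (4*R*F*(R+1)^2) * Real.sqrt y := by
            apply mul_le_mul_of_nonneg_left hysy (by positivity)
          have pos1 : 0 ≤ (1+(R+1)^2)*(π*L+4*π*F)*Real.sqrt y := by positivity
          rw [hCE]
          nlinarith [base, pos1]
        apply mul_le_mul_of_nonneg_right h1 (by positivity)

end Aux4

section Aux5

lemma PK_le_t {y x : ℝ} (hy : 0 < y) (t : ℝ) :
    PK y x t ≤ (2*(1+x^2)*(1+y^2)/y) * (1/(1+t^2)) := by
  have key : y^2*(1+t^2) ≤ 2*(1+x^2)*(1+y^2)*((x-t)^2+y^2) := by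
    nlinarith [sq_nonneg (y*(x+(x-t))), sq_nonneg (x-t), sq_nonneg y, sq_nonneg x,
      sq_nonneg (x*(x-t)), sq_nonneg (y*y), sq_nonneg (x*y), sq_nonneg (y*(x-t)),
      sq_nonneg (x*y*(x-t)), sq_nonneg (y*y*x), sq_nonneg (y*y*(x-t))]
  unfold PK
  rw [mul_one_div, div_le_div_iff₀ (by positivity) (by positivity),
    div_mul_eq_mul_div, le_div_iff₀ hy]
  nlinarith [key]

lemma PK_integrable_mu {μ : Measure ℝ} (hμi : Integrable (fun l : ℝ => 1/(1+l^2)) μ)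
    {y : ℝ} (hy : 0 < y) (x : ℝ) : Integrable (fun t => PK y x t) μ := by
  apply Integrable.mono' (hμi.const_mul (2*(1+x^2)*(1+y^2)/y))
  · exact (PK_cont_t hy x).aestronglyMeasurable
  · apply Filter.Eventually.of_forall
    intro t
    rw [Real.norm_eq_abs, abs_of_nonneg (PK_nonneg hy x t)]
    exact PK_le_t hy t

lemma PKint_mu_le {μ : Measure ℝ} (hμi : Integrable (fun l : ℝ => 1/(1+l^2)) μ)
    {y : ℝ} (hy : 0 < y) (x : ℝ) :
    (∫ t, PK y x t ∂μ) ≤ (2*(1+x^2)*(1+y^2)/y) * ∫ t, 1/(1+t^2) ∂μ := by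
  rw [← integral_const_mul]
  exact integral_mono (PK_integrable_mu hμi hy x) (hμi.const_mul _) (fun t => PK_le_t hy t)

lemma f_integrable_mu {μ : Measure ℝ} (hμi : Integrable (fun l : ℝ => 1/(1+l^2)) μ)
    {f : ℝ → ℝ} {F R : ℝ} (hfc : Continuous f) (hF : ∀ x, |f x| ≤ F) (hR : 1 ≤ R)
    (hsupp : ∀ x, R ≤ |x| → f x = 0) : Integrable f μ := by
  have hF0 : 0 ≤ F := le_trans (abs_nonneg _) (hF 0)
  apply Integrable.mono' (hμi.const_mul ((1+R^2)*F))
  · exact hfc.aestronglyMeasurable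
  · apply Filter.Eventually.of_forall
    intro t
    rw [Real.norm_eq_abs, mul_one_div, le_div_iff₀ (by positivity)]
    by_cases h : |t| ≤ R
    · have h1 := hF t
      have ht2 : t^2 ≤ R^2 := by nlinarith [sq_abs t, abs_nonneg t]
      nlinarith [abs_nonneg (f t)]
    · push_neg at h
      rw [hsupp t h.le]
      simp only [abs_zero, zero_mul]
      positivity

lemma fPK_prod_integrable {μ : Measure ℝ} (hμi : Integrable (fun l : ℝ => 1/(1+l^2)) μ)
    {f : ℝ → ℝ} {F : ℝ} (hfc : Continuous f) (hF : ∀ x, |f x| ≤ F)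
    (hfs : HasCompactSupport f) {y : ℝ} (hy : 0 < y) :
    Integrable (fun p : ℝ × ℝ => f p.1 * PK y p.1 p.2) (volume.prod μ) := by
  haveI : SigmaFinite μ := sigmaFinite_of_int hμi
  set Mμ := ∫ t, 1/(1+t^2) ∂μ with hMμ
  have hMμ0 : 0 ≤ Mμ := integral_nonneg (fun t => by positivity)
  have hAESM : AEStronglyMeasurable (fun p : ℝ × ℝ => f p.1 * PK y p.1 p.2) (volume.prod μ) :=
    ((hfc.comp continuous_fst).mul (PK_cont hy)).aestronglyMeasurable
  rw [show (fun p : ℝ × ℝ => f p.1 * PK y p.1 p.2)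
    = Function.uncurry (fun x t => f x * PK y x t) from rfl] at hAESM ⊢
  apply (integrable_prod_iff hAESM).2
  constructor
  · apply Filter.Eventually.of_forall
    intro x
    have h : Integrable (fun t => f x * PK y x t) μ := (PK_integrable_mu hμi hy x).const_mul (f x)
    exact h
  · have hbd : ∀ x, (∫ t, ‖f x * PK y x t‖ ∂μ) ≤ ((2*(1+x^2)*(1+y^2)/y) * Mμ) * |f x| := by
      intro x
      have : ∀ t, ‖f x * PK y x t‖ = |f x| * PK y x t := by
        intro t
        rw [Real.norm_eq_abs, abs_mul, abs_of_nonneg (PK_nonneg hy x t)]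
      rw [show (fun t => ‖f x * PK y x t‖) = fun t => |f x| * PK y x t from funext this]
      rw [integral_const_mul]
      calc |f x| * ∫ t, PK y x t ∂μ ≤ |f x| * ((2*(1+x^2)*(1+y^2)/y) * Mμ) :=
            mul_le_mul_of_nonneg_left (PKint_mu_le hμi hy x) (abs_nonneg _)
      _ = ((2*(1+x^2)*(1+y^2)/y) * Mμ) * |f x| := by ring
    have gcont : Continuous (fun x => ((2*(1+x^2)*(1+y^2)/y) * Mμ) * |f x|) := by
      apply Continuous.mul _ hfc.abs
      fun_prop
    have gsupp : HasCompactSupport (fun x => ((2*(1+x^2)*(1+y^2)/y) * Mμ) * |f x|) := by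
      apply HasCompactSupport.mul_left
      exact hfs.comp_left (g := fun r : ℝ => |r|) abs_zero
    apply Integrable.mono' (gcont.integrable_of_hasCompactSupport gsupp)
    · exact hAESM.norm.integral_prod_right'
    · apply Filter.Eventually.of_forall
      intro x
      rw [Real.norm_eq_abs, abs_of_nonneg (integral_nonneg (fun t => norm_nonneg _))]
      exact hbd x

lemma A_repr {Yf : ℂ → ℂ} (bb cc : ℝ) {μ : Measure ℝ}
    (hμi : Integrable (fun l : ℝ => 1/(1+l^2)) μ)
    (hdef : ∀ w : ℂ, 0 < w.im → Yf w = (bb:ℂ) + (cc:ℂ)*w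
      + ∫ l : ℝ, (((l:ℂ)-w)⁻¹ - (l:ℂ)/(1+(l:ℂ)^2)) ∂μ)
    {f : ℝ → ℝ} {F : ℝ} (hfc : Continuous f) (hF : ∀ x, |f x| ≤ F)
    (hfs : HasCompactSupport f) {y : ℝ} (hy : 0 < y) :
    (∫ x, f x * (Yf ((x:ℂ) + (y:ℂ)*Complex.I)).im)
      = cc * y * (∫ x, f x) + ∫ t, (∫ x, f x * PK y x t) ∂μ
    ∧ Integrable (fun x => f x * (Yf ((x:ℂ) + (y:ℂ)*Complex.I)).im) := by
  haveI : SigmaFinite μ := sigmaFinite_of_int hμi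
  have hfI : Integrable f := hfc.integrable_of_hasCompactSupport hfs
  have hwim : ∀ x : ℝ, ((x:ℂ) + (y:ℂ)*Complex.I).im = y := by
    intro x; simp
  have hwre : ∀ x : ℝ, ((x:ℂ) + (y:ℂ)*Complex.I).re = x := by
    intro x; simp
  have hprod := fPK_prod_integrable hμi hfc hF hfs hy
  have hmargx : Integrable (fun x => ∫ t, f x * PK y x t ∂μ) := by
    have h := hprod.integral_prod_left
    exact h
  have hptw : ∀ x : ℝ, f x * (Yf ((x:ℂ) + (y:ℂ)*Complex.I)).im
      = f x * (cc*y) + ∫ t, f x * PK y x t ∂μ := by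
    intro x
    have him := imY bb cc hμi hdef (w := (x:ℂ) + (y:ℂ)*Complex.I) (by rw [hwim]; exact hy)
    rw [him, hwim, hwre]
    have hsymm : (∫ l, PK y l x ∂μ) = ∫ t, PK y x t ∂μ := by
      apply integral_congr_ae
      exact Filter.Eventually.of_forall (fun t => PK_symm y t x)
    rw [hsymm, mul_add, integral_const_mul]
  constructor
  · calc (∫ x, f x * (Yf ((x:ℂ) + (y:ℂ)*Complex.I)).im)
        = ∫ x, (f x * (cc*y) + ∫ t, f x * PK y x t ∂μ) := by
          congr 1; funext x; exact hptw x
    _ = (∫ x, f x * (cc*y)) + ∫ x, ∫ t, f x * PK y x t ∂μ :=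
        integral_add (hfI.mul_const _) hmargx
    _ = cc * y * (∫ x, f x) + ∫ t, (∫ x, f x * PK y x t) ∂μ := by
        rw [integral_mul_const, integral_integral_swap hprod]
        ring
  · rw [show (fun x => f x * (Yf ((x:ℂ) + (y:ℂ)*Complex.I)).im)
      = fun x => f x * (cc*y) + ∫ t, f x * PK y x t ∂μ from funext hptw]
    exact (hfI.mul_const _).add hmargx

lemma main_est {Yf : ℂ → ℂ} (bb cc : ℝ) {μ : Measure ℝ}
    (hμi : Integrable (fun l : ℝ => 1/(1+l^2)) μ)
    (hdef : ∀ w : ℂ, 0 < w.im → Yf w = (bb:ℂ) + (cc:ℂ)*w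
      + ∫ l : ℝ, (((l:ℂ)-w)⁻¹ - (l:ℂ)/(1+(l:ℂ)^2)) ∂μ)
    {f : ℝ → ℝ} {L F R : ℝ} (hfc : Continuous f)
    (hF : ∀ x, |f x| ≤ F) (hL : ∀ x z, |f x - f z| ≤ L * |x - z|) (hL0 : 0 ≤ L)
    (hR : 1 ≤ R) (hsupp : ∀ x, R ≤ |x| → f x = 0) (hfs : HasCompactSupport f)
    {y : ℝ} (hy : 0 < y) (hy1 : y ≤ 1) :
    |π * (∫ t, f t ∂μ)
        - ((∫ x, f x * (Yf ((x:ℂ) + (y:ℂ)*Complex.I)).im) - cc * y * (∫ x, f x))|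
      ≤ ((1+(R+1)^2) * (π*L + 4*π*F) + 4*R*F*(R+1)^2) * Real.sqrt y
          * (∫ t, 1/(1+t^2) ∂μ) := by
  haveI : SigmaFinite μ := sigmaFinite_of_int hμi
  have hfI : Integrable f := hfc.integrable_of_hasCompactSupport hfs
  obtain ⟨hrepr, _⟩ := A_repr bb cc hμi hdef hfc hF hfs hy
  rw [hrepr]
  have hμf : Integrable f μ := f_integrable_mu hμi hfc hF hR hsupp
  have hmargt : Integrable (fun t => ∫ x, f x * PK y x t) μ := by
    have h := (fPK_prod_integrable hμi hfc hF hfs hy).integral_prod_right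
    exact h
  have heq : π * (∫ t, f t ∂μ) - (cc * y * (∫ x, f x) + ∫ t, (∫ x, f x * PK y x t) ∂μ
        - cc * y * (∫ x, f x))
      = ∫ t, (π * f t - ∫ x, f x * PK y x t) ∂μ := by
    rw [integral_sub (hμf.const_mul π) hmargt, integral_const_mul]
    ring
  rw [heq]
  rw [← Real.norm_eq_abs]
  have hCE := kernel_approx hfc hfI hF hL hL0 hR hsupp hy hy1
  calc ‖∫ t, (π * f t - ∫ x, f x * PK y x t) ∂μ‖
      ≤ ∫ t, ((1+(R+1)^2) * (π*L + 4*π*F) + 4*R*F*(R+1)^2) * Real.sqrt y * (1/(1+t^2)) ∂μ := by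
        apply norm_integral_le_of_norm_le (hμi.const_mul _)
        apply Filter.Eventually.of_forall
        intro t
        rw [Real.norm_eq_abs, abs_sub_comm]
        exact hCE t
  _ = ((1+(R+1)^2) * (π*L + 4*π*F) + 4*R*F*(R+1)^2) * Real.sqrt y * (∫ t, 1/(1+t^2) ∂μ) :=
      integral_const_mul _ _

end Aux5

set_option maxHeartbeats 1600000

/-- (Lemma 2.7.) If Nevanlinna functions `Yₙ` with representations
`(bₙ, cₙ, μₙ)` converge uniformly on compact subsets of ℍ to a Nevanlinna function
`Y` with representation `(b, c, μ)`, then `μₙ → μ` vaguely. -/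
theorem stmt_8
    (Y : ℕ → ℂ → ℂ) (b c : ℕ → ℝ) (μ : ℕ → Measure ℝ)
    (Ylim : ℂ → ℂ) (blim clim : ℝ) (μlim : Measure ℝ)
    (hc : ∀ n, 0 ≤ c n) (hclim : 0 ≤ clim)
    (hμ : ∀ n, Integrable (fun l : ℝ => 1 / (1 + l ^ 2)) (μ n))
    (hμlim : Integrable (fun l : ℝ => 1 / (1 + l ^ 2)) μlim)
    (hYdef : ∀ n, ∀ w : ℂ, 0 < w.im →
      Y n w = (b n : ℂ) + (c n : ℂ) * w
        + ∫ l : ℝ, (((l : ℂ) - w)⁻¹ - (l : ℂ) / (1 + (l : ℂ) ^ 2)) ∂(μ n))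
    (hYlimdef : ∀ w : ℂ, 0 < w.im →
      Ylim w = (blim : ℂ) + (clim : ℂ) * w
        + ∫ l : ℝ, (((l : ℂ) - w)⁻¹ - (l : ℂ) / (1 + (l : ℂ) ^ 2)) ∂μlim)
    (hconv : ∀ K : Set ℂ, IsCompact K → K ⊆ {w : ℂ | 0 < w.im} →
      TendstoUniformlyOn (fun n => Y n) Ylim atTop K) :
    ∀ f : ℝ → ℝ, ContDiff ℝ (⊤ : ℕ∞) f → HasCompactSupport f →
      Tendsto (fun n => ∫ l : ℝ, f l ∂(μ n)) atTop (nhds (∫ l : ℝ, f l ∂μlim)) := by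
  intro f hsm hcs
  have hfc : Continuous f := hsm.continuous
  -- Lipschitz constant
  obtain ⟨Lnn, hLip⟩ := ContDiff.lipschitzWith_of_hasCompactSupport hcs hsm (by simp)
  set L : ℝ := (Lnn : ℝ) with hLdef
  have hL0 : 0 ≤ L := Lnn.coe_nonneg
  have hL : ∀ x z : ℝ, |f x - f z| ≤ L * |x - z| := by
    intro x z
    have := hLip.dist_le_mul x z
    rwa [Real.dist_eq, Real.dist_eq] at this
  -- sup bound
  obtain ⟨F, hFn⟩ := hcs.exists_bound_of_continuous hfc
  have hF : ∀ x, |f x| ≤ F := fun x => by rw [← Real.norm_eq_abs]; exact hFn x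
  have hF0 : 0 ≤ F := le_trans (abs_nonneg _) (hF 0)
  -- support radius
  obtain ⟨r, hr⟩ := hcs.isBounded.subset_closedBall (0:ℝ)
  set R : ℝ := max r 0 + 1 with hRdef
  have hR : 1 ≤ R := by
    have : (0:ℝ) ≤ max r 0 := le_max_right r 0
    linarith
  have hsupp : ∀ x : ℝ, R ≤ |x| → f x = 0 := by
    intro x hx
    apply image_eq_zero_of_notMem_tsupport
    intro hmem
    have := hr hmem
    rw [Metric.mem_closedBall, Real.dist_eq, sub_zero] at this
    have h1 : r ≤ max r 0 := le_max_left r 0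
    linarith
  -- integrability facts
  have hfIvol : Integrable f := hfc.integrable_of_hasCompactSupport hcs
  -- imaginary part at I and mass bounds
  have him_at_I : ∀ (Yf : ℂ → ℂ) (bb cc : ℝ) (ν : Measure ℝ)
      (hνi : Integrable (fun l : ℝ => 1/(1+l^2)) ν)
      (hdef : ∀ w : ℂ, 0 < w.im → Yf w = (bb:ℂ) + (cc:ℂ)*w
        + ∫ l : ℝ, (((l:ℂ)-w)⁻¹ - (l:ℂ)/(1+(l:ℂ)^2)) ∂ν),
      (Yf Complex.I).im = cc + ∫ t, 1/(1+t^2) ∂ν := by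
    intro Yf bb cc ν hνi hdef
    have h := imY bb cc hνi hdef (w := Complex.I) (by simp)
    rw [h, Complex.I_im, Complex.I_re, mul_one]
    congr 1
    apply integral_congr_ae
    apply Filter.Eventually.of_forall
    intro t
    unfold PK
    norm_num
    rw [add_comm]
  have hYI : ∀ n, (Y n Complex.I).im = c n + ∫ t, 1/(1+t^2) ∂(μ n) :=
    fun n => him_at_I (Y n) (b n) (c n) (μ n) (hμ n) (hYdef n)
  have hYlimI : (Ylim Complex.I).im = clim + ∫ t, 1/(1+t^2) ∂μlim :=
    him_at_I Ylim blim clim μlim hμlim hYlimdef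
  -- convergence at I gives bounds
  have htendI : Tendsto (fun n => Y n Complex.I) atTop (nhds (Ylim Complex.I)) := by
    have hK := hconv {Complex.I} isCompact_singleton
      (by intro w hw; rw [Set.mem_singleton_iff] at hw; subst hw; simp)
    exact tendstoUniformlyOn_singleton_iff_tendsto.1 hK
  have himtend : Tendsto (fun n => (Y n Complex.I).im) atTop (nhds (Ylim Complex.I).im) :=
    (Complex.continuous_im.tendsto _).comp htendI
  obtain ⟨M₀, hM₀⟩ := himtend.bddAbove_range
  have hM₀' : ∀ n, (Y n Complex.I).im ≤ M₀ := fun n => hM₀ ⟨n, rfl⟩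
  set M : ℝ := max M₀ ((Ylim Complex.I).im) with hMdef
  have hmassn : ∀ n, (∫ t, 1/(1+t^2) ∂(μ n)) ≤ M := by
    intro n
    have h1 := hYI n
    have h2 := hM₀' n
    have h3 := hc n
    have : (∫ t, 1/(1+t^2) ∂(μ n)) ≤ M₀ := by rw [h1] at h2; linarith
    exact le_trans this (le_max_left _ _)
  have hcnM : ∀ n, c n ≤ M := by
    intro n
    have h1 := hYI n
    have h2 := hM₀' n
    have h4 : 0 ≤ ∫ t, 1/(1+t^2) ∂(μ n) := integral_nonneg (fun t => by positivity)
    have : c n ≤ M₀ := by rw [h1] at h2; linarith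
    exact le_trans this (le_max_left _ _)
  have hmasslim : (∫ t, 1/(1+t^2) ∂μlim) ≤ M := by
    have h2 : (Ylim Complex.I).im ≤ M := le_max_right _ _
    rw [hYlimI] at h2
    linarith
  have hclimM : clim ≤ M := by
    have h2 : (Ylim Complex.I).im ≤ M := le_max_right _ _
    have h4 : 0 ≤ ∫ t, 1/(1+t^2) ∂μlim := integral_nonneg (fun t => by positivity)
    rw [hYlimI] at h2
    linarith
  have hM0 : 0 ≤ M := le_trans (integral_nonneg (fun t => by positivity)) hmasslim
  -- constants
  set CE : ℝ := (1+(R+1)^2) * (π*L + 4*π*F) + 4*R*F*(R+1)^2 with hCEdef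
  have hπ : (0:ℝ) < π := Real.pi_pos
  have hCE0 : 0 ≤ CE := by
    apply add_nonneg
    · apply mul_nonneg (by positivity)
      apply add_nonneg (mul_nonneg hπ.le hL0)
      apply mul_nonneg (by positivity) hF0
    · apply mul_nonneg (mul_nonneg (by positivity) hF0) (by positivity)
  set S : ℝ := ∫ x, f x with hSdef
  set Fb : ℝ := ∫ x, |f x| with hFbdef
  have hFb0 : 0 ≤ Fb := integral_nonneg (fun x => abs_nonneg _)
  -- epsilon argument
  rw [Metric.tendsto_atTop]
  intro ε hε
  set T : ℝ := CE*M + M*|S| with hTdef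
  have hT0 : 0 ≤ T := add_nonneg (mul_nonneg hCE0 hM0) (mul_nonneg hM0 (abs_nonneg _))
  set η : ℝ := (π*ε/2)/(2*T+1) with hηdef
  have hη : 0 < η := by positivity
  set y : ℝ := min 1 (η^2) with hydef
  have hy : 0 < y := lt_min one_pos (by positivity)
  have hy1 : y ≤ 1 := min_le_left _ _
  have hsyle : Real.sqrt y ≤ η := by
    calc Real.sqrt y ≤ Real.sqrt (η^2) := Real.sqrt_le_sqrt (min_le_right _ _)
    _ = η := Real.sqrt_sq hη.le
  have hsy0 : 0 ≤ Real.sqrt y := Real.sqrt_nonneg y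
  have hysy : y ≤ Real.sqrt y := by
    have h1 : Real.sqrt y ≤ 1 := by
      rw [show (1:ℝ) = Real.sqrt 1 by simp]
      exact Real.sqrt_le_sqrt hy1
    nlinarith [Real.sq_sqrt hy.le]
  -- uniform convergence on compact strip
  set K : Set ℂ := (fun x : ℝ => (x:ℂ) + (y:ℂ)*Complex.I) '' (Icc (-R) R) with hKdef
  have hKcomp : IsCompact K := isCompact_Icc.image (by fun_prop)
  have hKsub : K ⊆ {w : ℂ | 0 < w.im} := by
    rintro w ⟨x, _, rfl⟩
    simp only [mem_setOf_eq, Complex.add_im, Complex.ofReal_im, Complex.mul_im,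
      Complex.ofReal_re, Complex.I_im, Complex.I_re]
    simpa using hy
  have hUC := hconv K hKcomp hKsub
  rw [Metric.tendstoUniformlyOn_iff] at hUC
  set ε'' : ℝ := (π*ε/2)/(Fb+1) with hε''def
  have hε''pos : 0 < ε'' := by positivity
  obtain ⟨N, hN⟩ := eventually_atTop.1 (hUC ε'' hε''pos)
  refine ⟨N, fun n hn => ?_⟩
  -- notation
  set An : ℝ := ∫ x, f x * (Y n ((x:ℂ) + (y:ℂ)*Complex.I)).im with hAndef
  set Al : ℝ := ∫ x, f x * (Ylim ((x:ℂ) + (y:ℂ)*Complex.I)).im with hAldef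
  set Fn : ℝ := ∫ t, f t ∂(μ n) with hFndef
  set Fl : ℝ := ∫ t, f t ∂μlim with hFldef
  -- two main estimates
  have hXn : |π * Fn - (An - c n * y * S)| ≤ CE * Real.sqrt y * M := by
    have h := main_est (b n) (c n) (hμ n) (hYdef n) hfc hF hL hL0 hR hsupp hcs hy hy1
    calc |π * Fn - (An - c n * y * S)|
        ≤ CE * Real.sqrt y * (∫ t, 1/(1+t^2) ∂(μ n)) := h
    _ ≤ CE * Real.sqrt y * M :=
        mul_le_mul_of_nonneg_left (hmassn n) (by positivity)
  have hXl : |π * Fl - (Al - clim * y * S)| ≤ CE * Real.sqrt y * M := by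
    have h := main_est blim clim hμlim hYlimdef hfc hF hL hL0 hR hsupp hcs hy hy1
    calc |π * Fl - (Al - clim * y * S)|
        ≤ CE * Real.sqrt y * (∫ t, 1/(1+t^2) ∂μlim) := h
    _ ≤ CE * Real.sqrt y * M :=
        mul_le_mul_of_nonneg_left hmasslim (by positivity)
  -- A-difference estimate
  have hInt_n : Integrable (fun x => f x * (Y n ((x:ℂ) + (y:ℂ)*Complex.I)).im) :=
    (A_repr (b n) (c n) (hμ n) (hYdef n) hfc hF hcs hy).2
  have hInt_l : Integrable (fun x => f x * (Ylim ((x:ℂ) + (y:ℂ)*Complex.I)).im) :=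
    (A_repr blim clim hμlim hYlimdef hfc hF hcs hy).2
  have hAdiff : |An - Al| ≤ Fb * ε'' := by
    have heq : An - Al = ∫ x, (f x * (Y n ((x:ℂ) + (y:ℂ)*Complex.I)).im
        - f x * (Ylim ((x:ℂ) + (y:ℂ)*Complex.I)).im) := by
      rw [integral_sub hInt_n hInt_l]
    rw [heq, ← Real.norm_eq_abs]
    have hb : ∀ x : ℝ, ‖f x * (Y n ((x:ℂ) + (y:ℂ)*Complex.I)).im
        - f x * (Ylim ((x:ℂ) + (y:ℂ)*Complex.I)).im‖ ≤ |f x| * ε'' := by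
      intro x
      by_cases hfx : f x = 0
      · rw [hfx]
        simp [hε''pos.le]
      · have hx : |x| < R := by
          by_contra hcon
          exact hfx (hsupp x (le_of_not_gt hcon))
        have hwK : ((x:ℂ) + (y:ℂ)*Complex.I) ∈ K := by
          refine ⟨x, ?_, rfl⟩
          rw [mem_Icc]
          constructor <;> [linarith [abs_le.1 hx.le |>.1]; linarith [abs_le.1 hx.le |>.2]]
        have hd := hN n hn _ hwK
        have him : |(Y n ((x:ℂ) + (y:ℂ)*Complex.I)).im
            - (Ylim ((x:ℂ) + (y:ℂ)*Complex.I)).im| ≤ ε'' := by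
          have h1 : |(Y n ((x:ℂ) + (y:ℂ)*Complex.I) - Ylim ((x:ℂ) + (y:ℂ)*Complex.I)).im|
              ≤ ‖(Y n ((x:ℂ) + (y:ℂ)*Complex.I) - Ylim ((x:ℂ) + (y:ℂ)*Complex.I))‖ :=
            Complex.abs_im_le_norm _
          rw [Complex.sub_im] at h1
          have h2 : ‖(Y n ((x:ℂ) + (y:ℂ)*Complex.I)
              - Ylim ((x:ℂ) + (y:ℂ)*Complex.I))‖
              = dist (Ylim ((x:ℂ) + (y:ℂ)*Complex.I)) (Y n ((x:ℂ) + (y:ℂ)*Complex.I)) := by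
            rw [dist_comm, Complex.dist_eq]
          rw [h2] at h1
          exact le_trans h1 hd.le
        calc ‖f x * (Y n ((x:ℂ) + (y:ℂ)*Complex.I)).im
            - f x * (Ylim ((x:ℂ) + (y:ℂ)*Complex.I)).im‖
            = |f x| * |(Y n ((x:ℂ) + (y:ℂ)*Complex.I)).im
              - (Ylim ((x:ℂ) + (y:ℂ)*Complex.I)).im| := by
              rw [Real.norm_eq_abs, ← abs_mul, mul_sub]
        _ ≤ |f x| * ε'' := mul_le_mul_of_nonneg_left him (abs_nonneg _)
    calc ‖∫ x, (f x * (Y n ((x:ℂ) + (y:ℂ)*Complex.I)).im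
        - f x * (Ylim ((x:ℂ) + (y:ℂ)*Complex.I)).im)‖
        ≤ ∫ x, |f x| * ε'' := norm_integral_le_of_norm_le (hfIvol.abs.mul_const _)
          (Filter.Eventually.of_forall hb)
    _ = Fb * ε'' := integral_mul_const _ _
  -- |c n - clim| bound
  have hcdiff : |c n - clim| ≤ 2 * M := by
    have h1 : |c n - clim| ≤ |c n| + |clim| := abs_sub _ _
    rw [abs_of_nonneg (hc n), abs_of_nonneg hclim] at h1
    linarith [hcnM n, hclimM]
  -- combine
  clear_value An Al Fn Fl T η y ε'' S Fb CE M L R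
  have hsplit : π * Fn - π * Fl
      = (π * Fn - (An - c n * y * S)) - (π * Fl - (Al - clim * y * S))
        + (An - Al) + (clim - c n) * (y * S) := by ring
  have habs : |π * Fn - π * Fl|
      ≤ CE * Real.sqrt y * M + CE * Real.sqrt y * M + Fb * ε'' + 2*M * (y * |S|) := by
    rw [hsplit]
    have h4 : |(clim - c n) * (y * S)| ≤ 2*M * (y * |S|) := by
      rw [abs_mul, abs_mul, abs_of_nonneg hy.le, abs_sub_comm]
      apply mul_le_mul_of_nonneg_right hcdiff (by positivity)
    calc |(π * Fn - (An - c n * y * S)) - (π * Fl - (Al - clim * y * S))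
          + (An - Al) + (clim - c n) * (y * S)|
        ≤ |(π * Fn - (An - c n * y * S)) - (π * Fl - (Al - clim * y * S))
          + (An - Al)| + |(clim - c n) * (y * S)| := abs_add_le _ _
    _ ≤ |(π * Fn - (An - c n * y * S)) - (π * Fl - (Al - clim * y * S))|
          + |An - Al| + |(clim - c n) * (y * S)| := by
        have := abs_add_le ((π * Fn - (An - c n * y * S)) - (π * Fl - (Al - clim * y * S)))
          (An - Al)
        linarith
    _ ≤ (|π * Fn - (An - c n * y * S)| + |π * Fl - (Al - clim * y * S)|)
          + |An - Al| + |(clim - c n) * (y * S)| := by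
        have := abs_sub (π * Fn - (An - c n * y * S)) (π * Fl - (Al - clim * y * S))
        linarith
    _ ≤ CE * Real.sqrt y * M + CE * Real.sqrt y * M + Fb * ε'' + 2*M * (y * |S|) := by
        linarith [hXn, hXl, hAdiff, h4]
  -- numeric bounds
  have hnum1 : CE * Real.sqrt y * M + CE * Real.sqrt y * M + 2*M * (y * |S|) < π * ε / 2 := by
    have h1 : CE * Real.sqrt y * M + CE * Real.sqrt y * M + 2*M * (y * |S|)
        ≤ 2 * T * Real.sqrt y := by
      have hy2 : y * |S| ≤ Real.sqrt y * |S| :=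
        mul_le_mul_of_nonneg_right hysy (abs_nonneg _)
      rw [hTdef]
      nlinarith [mul_nonneg hM0 (abs_nonneg S), hsy0]
    have h2 : 2 * T * Real.sqrt y ≤ 2 * T * η :=
      mul_le_mul_of_nonneg_left hsyle (by linarith)
    have h3 : 2 * T * η < π * ε / 2 := by
      rw [hηdef, mul_div_assoc']
      rw [div_lt_iff₀ (by linarith)]
      nlinarith
    linarith
  have hnum2 : Fb * ε'' < π * ε / 2 := by
    rw [hε''def, mul_div_assoc']
    rw [div_lt_iff₀ (by positivity)]
    nlinarith
  have hfinal : |π * Fn - π * Fl| < π * ε := by linarith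
  rw [Real.dist_eq]
  have : |Fn - Fl| < ε := by
    have heq : |π * Fn - π * Fl| = π * |Fn - Fl| := by
      rw [← mul_sub, abs_mul, abs_of_pos hπ]
    rw [heq] at hfinal
    nlinarith
  exact this
end

section
/- For every A ≥ 1 there exists C > 0, depending only on A, with the following property. If x : ℕ → ℝ satisfies |x_{i−1} + (3πi/2)^{2/3}| ≤ A for all i ≥ 1, then for every y ∈ ℝ the set {i ∈ ℕ : y − 1 ≤ x_i ≤ y + 1} is finite and has at most C·√(|y| + 1) elements. -/
private lemma aux_sqrt_le (A : ℝ) (hA : 1 ≤ A) : Real.sqrt (A + 1) ≤ A + 1 := by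
  nlinarith [Real.sq_sqrt (by linarith : (0:ℝ) ≤ A + 1), Real.sqrt_nonneg (A + 1),
    sq_nonneg (Real.sqrt (A + 1) - 1)]

private lemma aux_cube (p q : ℝ) (hp0 : 0 ≤ p) (hpq : p ≤ q) :
    q ^ 3 - p ^ 3 ≤ 3 * q * (q ^ 2 - p ^ 2) := by
  nlinarith [mul_nonneg (sq_nonneg (q - p)) (by linarith : (0:ℝ) ≤ 2 * q + p)]

private lemma aux_two (A q d v : ℝ) (hA : 1 ≤ A) (hq : 0 ≤ q) (hd : d ≤ 2 * A + 2)
    (hv : v ≤ 3 * q * d) : v ≤ 6 * (A + 1) * q := by nlinarith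

private lemma aux_three (A q u v : ℝ) (hA : 1 ≤ A) (hq : 0 ≤ q) (hu : 4.5 ≤ u)
    (hv : v ≤ 6 * (A + 1) * q) : v ≤ 2 * (A + 1) * q * u := by
  nlinarith [mul_nonneg (mul_nonneg (by linarith : (0:ℝ) ≤ A + 1) hq)
    (by linarith : (0:ℝ) ≤ u - 4.5), mul_nonneg (by linarith : (0:ℝ) ≤ A + 1) hq]

private lemma aux_five (A q s : ℝ) (hA : 1 ≤ A) (hs : 0 ≤ s) (h : q ≤ (A + 1) * s) :
    2 * (A + 1) * q ≤ 2 * (A + 1) ^ 2 * s := by nlinarith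

private lemma aux_last (A q s r : ℝ) (hA : 1 ≤ A) (hs : 0 ≤ s) (hq : q ≤ r * s)
    (hr : r ≤ A + 1) (hr0 : 0 ≤ r) : q ≤ (A + 1) * s := by nlinarith

/-- (Wegner-type counting estimate (3.2), Airy-free form.) For every
`A ≥ 1` there is `C > 0` depending only on `A` such that: if every particle `xᵢ` is
within `A` of `−(3πi/2)^{2/3}`, then for every `y` the set of indices `i` with
`xᵢ ∈ [y−1, y+1]` is finite with at most `C·√(|y|+1)` elements. -/
theorem stmt_15 (A : ℝ) (hA : 1 ≤ A) :
    ∃ C : ℝ, 0 < C ∧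
      ∀ x : ℕ → ℝ,
        (∀ i : ℕ, 1 ≤ i →
          |x (i - 1) + (3 * Real.pi * i / 2) ^ ((2 : ℝ) / 3)| ≤ A) →
        ∀ y : ℝ,
          {i : ℕ | y - 1 ≤ x i ∧ x i ≤ y + 1}.Finite ∧
          ({i : ℕ | y - 1 ≤ x i ∧ x i ≤ y + 1}.ncard : ℝ)
            ≤ C * Real.sqrt (|y| + 1) := by
  refine ⟨2 * (A + 1) ^ 2 + 1, by positivity, ?_⟩
  intro x hx y
  set u : ℝ := 3 * Real.pi / 2 with hu
  have hπ : (3 : ℝ) < Real.pi := Real.pi_gt_three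
  have hu4 : (4.5 : ℝ) ≤ u := by rw [hu]; nlinarith
  have hu0 : (0 : ℝ) < u := by linarith
  set a : ℝ := max 0 (-A - 1 - y) with ha
  set b : ℝ := max 0 (A + 1 - y) with hb
  have ha0 : 0 ≤ a := le_max_left _ _
  have hb0 : 0 ≤ b := le_max_left _ _
  have hab : a ≤ b := max_le_max le_rfl (by linarith)
  set α : ℝ := a ^ ((3 : ℝ) / 2) / u with hαdef
  set β : ℝ := b ^ ((3 : ℝ) / 2) / u with hβdef
  have hα0 : 0 ≤ α := by positivity
  have hβ0 : 0 ≤ β := by positivity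
  have hαβ : α ≤ β := by
    rw [hαdef, hβdef]
    gcongr
  -- key: every index in the window lies in [α - 1, β - 1]
  have key : ∀ j : ℕ, y - 1 ≤ x j → x j ≤ y + 1 →
      α ≤ (j : ℝ) + 1 ∧ (j : ℝ) + 1 ≤ β := by
    intro j h1 h2
    have hx' := hx (j + 1) (by omega)
    simp only [Nat.add_sub_cancel] at hx'
    set z : ℝ := 3 * Real.pi * ((j : ℝ) + 1) / 2 with hz
    have hzc : (3 : ℝ) * Real.pi * ((j + 1 : ℕ) : ℝ) / 2 = z := by push_cast [hz]; ring
    rw [hzc] at hx'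
    have hz0 : 0 ≤ z := by positivity
    set t : ℝ := z ^ ((2 : ℝ) / 3) with htdef
    have ht0 : 0 ≤ t := Real.rpow_nonneg hz0 _
    obtain ⟨hl, hr⟩ := abs_le.mp hx'
    have hta : a ≤ t := max_le ht0 (by linarith)
    have htb : t ≤ b := le_trans (by linarith) (le_max_right _ _)
    have htz : t ^ ((3 : ℝ) / 2) = z := by
      rw [htdef, ← Real.rpow_mul hz0]
      norm_num
    have hzu : z = u * ((j : ℝ) + 1) := by rw [hz, hu]; ring
    constructor
    · have h := Real.rpow_le_rpow ha0 hta (by norm_num : (0:ℝ) ≤ (3:ℝ)/2)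
      rw [htz, hzu] at h
      rw [hαdef, div_le_iff₀ hu0]
      linarith [h]
    · have h := Real.rpow_le_rpow ht0 htb (by norm_num : (0:ℝ) ≤ (3:ℝ)/2)
      rw [htz, hzu] at h
      rw [hβdef, le_div_iff₀ hu0]
      linarith [h]
  set S := {i : ℕ | y - 1 ≤ x i ∧ x i ≤ y + 1} with hS
  set n : ℕ := ⌈α⌉₊ - 1 with hn
  set m : ℕ := ⌊β⌋₊ with hm
  have hsub : S ⊆ ↑(Finset.Ico n m) := by
    intro j hj
    obtain ⟨h1, h2⟩ := key j hj.1 hj.2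
    simp only [Finset.coe_Ico, Set.mem_Ico]
    constructor
    · have : ⌈α⌉₊ ≤ j + 1 := Nat.ceil_le.mpr (by push_cast; linarith)
      omega
    · have : j + 1 ≤ m := Nat.le_floor (by push_cast; linarith)
      omega
  have hfin : S.Finite := (Finset.Ico n m).finite_toSet.subset hsub
  refine ⟨hfin, ?_⟩
  have hcard : S.ncard ≤ m - n := by
    have := Set.ncard_le_ncard hsub (Finset.Ico n m).finite_toSet
    rwa [Set.ncard_coe_finset, Nat.card_Ico] at this
  -- real bounds on m, n
  have hmle : (m : ℝ) ≤ β := Nat.floor_le hβ0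
  have hnge : α - 1 ≤ (n : ℝ) := by
    rcases Nat.eq_zero_or_pos ⌈α⌉₊ with h0 | hpos
    · have hle : α ≤ (⌈α⌉₊ : ℝ) := Nat.le_ceil α
      rw [h0] at hle
      norm_num at hle
      simp only [hn, h0, Nat.zero_sub, Nat.cast_zero]
      linarith
    · have hle : α ≤ (⌈α⌉₊ : ℝ) := Nat.le_ceil α
      have : (n : ℝ) = (⌈α⌉₊ : ℝ) - 1 := by
        rw [hn, Nat.cast_sub hpos, Nat.cast_one]
      linarith
  have hcast : ((m - n : ℕ) : ℝ) ≤ β - α + 1 := by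
    rcases le_or_gt n m with hle | hlt
    · rw [Nat.cast_sub hle]; linarith
    · have : m - n = 0 := by omega
      rw [this]; push_cast; linarith
  have hcard' : (S.ncard : ℝ) ≤ β - α + 1 := by
    calc (S.ncard : ℝ) ≤ ((m - n : ℕ) : ℝ) := by exact_mod_cast hcard
    _ ≤ β - α + 1 := hcast
  clear hx key hsub hcard hmle hnge hcast
  clear_value S n m
  clear_value a b α β u
  -- now estimate β - α + 1
  set s : ℝ := Real.sqrt (|y| + 1) with hs
  have hs1 : 1 ≤ s := by
    rw [hs]
    have : (1 : ℝ) = Real.sqrt 1 := by simp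
    rw [this]
    exact Real.sqrt_le_sqrt (by linarith [abs_nonneg y])
  set p : ℝ := Real.sqrt a with hp
  set q : ℝ := Real.sqrt b with hq
  have hp0 : 0 ≤ p := Real.sqrt_nonneg _
  have hq0 : 0 ≤ q := Real.sqrt_nonneg _
  have hpq : p ≤ q := Real.sqrt_le_sqrt hab
  have hp2 : p ^ 2 = a := Real.sq_sqrt ha0
  have hq2 : q ^ 2 = b := Real.sq_sqrt hb0
  have ha32 : a ^ ((3 : ℝ) / 2) = p ^ 3 := by
    rw [hp, Real.sqrt_eq_rpow, ← Real.rpow_natCast (a ^ ((1:ℝ)/2)) 3,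
      ← Real.rpow_mul ha0]
    norm_num
  have hb32 : b ^ ((3 : ℝ) / 2) = q ^ 3 := by
    rw [hq, Real.sqrt_eq_rpow, ← Real.rpow_natCast (b ^ ((1:ℝ)/2)) 3,
      ← Real.rpow_mul hb0]
    norm_num
  clear_value s p q
  -- b - a ≤ 2A + 2
  have hba : b - a ≤ 2 * A + 2 := by
    have h1 : -A - 1 - y ≤ a := by rw [ha]; exact le_max_right _ _
    have h2 : b ≤ 2 * A + 2 + a := by
      rw [hb]
      apply max_le
      · linarith
      · linarith
    linarith
  -- q ≤ sqrt(A+1) * s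
  have hqs : q ≤ (A + 1) * s := by
    have h1 : b ≤ (A + 1) * (|y| + 1) := by
      rw [hb]
      apply max_le
      · positivity
      · have := abs_nonneg y
        have := neg_abs_le y
        nlinarith
    have h2 : q ≤ Real.sqrt ((A + 1) * (|y| + 1)) := by
      rw [hq]; exact Real.sqrt_le_sqrt h1
    have h3 : Real.sqrt ((A + 1) * (|y| + 1)) = Real.sqrt (A + 1) * s := by
      rw [hs, Real.sqrt_mul (by linarith)]
    have h4 : Real.sqrt (A + 1) ≤ A + 1 := aux_sqrt_le A hA
    have h5 : q ≤ Real.sqrt (A + 1) * s := by rw [← h3]; exact h2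
    exact aux_last A q s (Real.sqrt (A + 1)) hA (by linarith) h5 h4 (Real.sqrt_nonneg _)
  -- cubic difference bound
  have hcube : q ^ 3 - p ^ 3 ≤ 3 * q * (q ^ 2 - p ^ 2) := aux_cube p q hp0 hpq
  have hdiff : β - α ≤ 2 * (A + 1) ^ 2 * s := by
    have h1 : β - α = (q ^ 3 - p ^ 3) / u := by
      rw [hβdef, hαdef, hb32, ha32]; ring
    have h2 : q ^ 3 - p ^ 3 ≤ 6 * (A + 1) * q := by
      have hpq2 : q ^ 2 - p ^ 2 = b - a := by rw [hp2, hq2]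
      exact aux_two A q (q ^ 2 - p ^ 2) (q ^ 3 - p ^ 3) hA hq0 (by rw [hpq2]; linarith) hcube
    have h3 : (q ^ 3 - p ^ 3) / u ≤ 2 * (A + 1) * q := by
      rw [div_le_iff₀ hu0]
      exact aux_three A q u (q ^ 3 - p ^ 3) hA hq0 hu4 h2
    have h5 : 2 * (A + 1) * q ≤ 2 * (A + 1) ^ 2 * s :=
      aux_five A q s hA (by linarith) hqs
    rw [h1]
    linarith
  calc (S.ncard : ℝ) ≤ β - α + 1 := hcard'
  _ ≤ 2 * (A + 1) ^ 2 * s + s := by linarith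
  _ = (2 * (A + 1) ^ 2 + 1) * s := by ring
end

section
/- Let x : ℕ → ℝ, E ∈ ℝ, 0 < δ ≤ 1, b > 0, and D ≥ 1. Assume: (i) |x_i − E| ≥ δ/2 for all i; (ii) for every integer m ≥ 1, the set {i ∈ ℕ : δ/2 + (m − 1) ≤ |x_i − E| ≤ δ/2 + m} has at most D·√m elements; (iii) δ ≥ 8·b·√D. Then ∑_{i∈ℕ} b/((x_i − E)² + b²) ≤ 1/(4b). -/
open Finset

/-!
Sort the particles into the unit shells `δ/2 + (m - 1) ≤ |xᵢ - E| ≤ δ/2 + m`, `m ≥ 1`. A particle in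
shell `m` contributes at most `b / ((δ/2 + m - 1)² + b²)`, and shell `m` holds at most `D√m`
particles. The first shell therefore contributes at most `4Db/δ² ≤ 1/(16b)`. For `m ≥ 2` the
contribution `Db√m/(m - 1)²` is dominated by the telescoping term `8Db (1/√(m-1) - 1/√m)`, so all
these shells together contribute at most `8Db ≤ 1/(8b)`. Both bounds come from `64 D b² ≤ δ² ≤ 1`.
-/

theorem sqrt_add_one_div_sq_le {t : ℝ} (ht : 1 ≤ t) :
    √(t + 1) / t ^ 2 ≤ 8 * (1 / √t - 1 / √(t + 1)) := by
  obtain ⟨u, hu, rfl⟩ : ∃ u : ℝ, 1 ≤ u ∧ u ^ 2 = t :=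
    ⟨√t, Real.one_le_sqrt.mpr ht, Real.sq_sqrt (by linarith)⟩
  set v := √(u ^ 2 + 1)
  have hv2 : v ^ 2 = u ^ 2 + 1 := Real.sq_sqrt (by positivity)
  have hv : 0 < v := by positivity
  have huv : u ≤ v := by nlinarith
  -- `1/u - 1/v = 1/(u v (u + v))`
  have hconj : (v - u) * (u + v) = 1 := by nlinarith
  rw [Real.sqrt_sq (by linarith), div_sub_div _ _ (by positivity) hv.ne', one_mul, mul_one,
    mul_div_assoc', div_le_div_iff₀ (by positivity) (by positivity)]
  refine le_of_mul_le_mul_right ?_ (by positivity : 0 < u + v)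
  calc v * (u * v) * (u + v) = u * (u ^ 2 + 1) * (u + v) := by rw [← hv2]; ring
    _ ≤ u * (2 * u ^ 2) * (3 * u) := by gcongr <;> nlinarith
    _ ≤ 8 * u ^ 4 := by nlinarith [pow_pos (by linarith : (0:ℝ) < u) 4]
    _ = 8 * (v - u) * (u ^ 2) ^ 2 * (u + v) := by linear_combination (-8 * u ^ 4) * hconj

theorem sum_range_sqrt_div_sq_le (N : ℕ) :
    ∑ k ∈ range N, √((k : ℝ) + 2) / ((k : ℝ) + 1) ^ 2 ≤ 8 := by
  have htel := sum_range_sub' (fun k : ℕ => 1 / √((k : ℝ) + 1)) N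
  push_cast [add_assoc, one_add_one_eq_two] at htel
  calc ∑ k ∈ range N, √((k : ℝ) + 2) / ((k : ℝ) + 1) ^ 2
      ≤ ∑ k ∈ range N, 8 * (1 / √((k : ℝ) + 1) - 1 / √((k : ℝ) + 2)) := by
        refine sum_le_sum fun k _ => ?_
        have := sqrt_add_one_div_sq_le (t := (k : ℝ) + 1) (by simp)
        rwa [add_assoc, one_add_one_eq_two] at this
    _ = 8 * (1 - 1 / √((N : ℝ) + 1)) := by rw [← mul_sum, htel]; simp
    _ ≤ 8 := by
        have : 0 ≤ 1 / √((N : ℝ) + 1) := by positivity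
        linarith

theorem sum_le_sum_image_mul_of_card_fiber_le {ι κ R : Type*} [DecidableEq κ] [Semiring R]
    [PartialOrder R] [IsOrderedRing R] {s : Finset ι} {g : ι → κ} {f : ι → R} {c w : κ → R}
    (hf : ∀ i ∈ s, f i ≤ w (g i)) (hw : ∀ i ∈ s, 0 ≤ w (g i))
    (hc : ∀ i ∈ s, (#{j ∈ s | g j = g i} : R) ≤ c (g i)) :
    ∑ i ∈ s, f i ≤ ∑ m ∈ s.image g, c m * w m :=
  calc ∑ i ∈ s, f i ≤ ∑ i ∈ s, w (g i) := sum_le_sum hf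
    _ = ∑ m ∈ s.image g, #{j ∈ s | g j = m} • w m := sum_comp w g
    _ ≤ ∑ m ∈ s.image g, c m * w m := sum_le_sum fun m hm => by
        obtain ⟨i, hi, rfl⟩ := mem_image.1 hm
        rw [nsmul_eq_mul]
        exact mul_le_mul_of_nonneg_right (hc i hi) (hw i hi)

theorem natFloor_sub_add_one_bounds {r c : ℝ} (h : c ≤ r) :
    c + (((⌊r - c⌋₊ + 1 : ℕ) : ℝ) - 1) ≤ r ∧ r ≤ c + ((⌊r - c⌋₊ + 1 : ℕ) : ℝ) := by
  push_cast
  constructor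
  · linarith [Nat.floor_le (sub_nonneg.2 h)]
  · linarith [Nat.lt_floor_add_one (r - c)]

theorem div_sq_add_sq_le_of_le_abs {b r y : ℝ} (hb : 0 < b) (hr : 0 ≤ r) (h : r ≤ |y|) :
    b / (y ^ 2 + b ^ 2) ≤ b / (r ^ 2 + b ^ 2) := by
  refine div_le_div_of_nonneg_left hb.le (by positivity) ?_
  rw [← sq_abs y]
  gcongr

theorem sum_shell_weight_le {δ b D : ℝ} (hδ : 0 ≤ δ) (hδ1 : δ ≤ 1) (hb : 0 < b) (hD : 0 ≤ D)
    (hδb : 8 * b * √D ≤ δ) (T : Finset ℕ) :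
    ∑ m ∈ T, D * √m * (b / ((δ / 2 + ((m : ℝ) - 1)) ^ 2 + b ^ 2)) ≤ 1 / (4 * b) := by
  set w : ℕ → ℝ := fun m => D * √m * (b / ((δ / 2 + ((m : ℝ) - 1)) ^ 2 + b ^ 2))
  have hw : ∀ m, 0 ≤ w m := fun m => by positivity
  have hbDδ : 64 * b ^ 2 * D ≤ δ ^ 2 := by
    have := pow_le_pow_left₀ (by positivity) hδb 2
    rw [mul_pow, Real.sq_sqrt hD] at this
    linear_combination this
  have hw1 : w 1 ≤ 1 / (16 * b) := by
    simp only [w, Nat.cast_one, Real.sqrt_one, sub_self, add_zero, mul_one]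
    rw [← mul_div_assoc, div_le_div_iff₀ (by positivity) (by positivity)]
    nlinarith
  have hw2 : ∀ k : ℕ, w (k + 2) ≤ D * b * (√((k : ℝ) + 2) / ((k : ℝ) + 1) ^ 2) := fun k => by
    have hk : (k : ℝ) + 1 ≤ |δ / 2 + (((k + 2 : ℕ) : ℝ) - 1)| :=
      le_abs.2 (Or.inl (by push_cast; linarith))
    calc w (k + 2) ≤ D * √((k + 2 : ℕ) : ℝ) * (b / (((k : ℝ) + 1) ^ 2 + b ^ 2)) :=
          mul_le_mul_of_nonneg_left (div_sq_add_sq_le_of_le_abs hb (by positivity) hk)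
            (by positivity)
      _ ≤ D * √((k + 2 : ℕ) : ℝ) * (b / ((k : ℝ) + 1) ^ 2) := by
          gcongr; exact le_add_of_nonneg_right (by positivity)
      _ = D * b * (√((k : ℝ) + 2) / ((k : ℝ) + 1) ^ 2) := by push_cast; ring
  have htail : ∑ k ∈ range (T.sup id), w (k + 2) ≤ 1 / (8 * b) :=
    calc ∑ k ∈ range (T.sup id), w (k + 2)
        ≤ ∑ k ∈ range (T.sup id), D * b * (√((k : ℝ) + 2) / ((k : ℝ) + 1) ^ 2) :=
          sum_le_sum fun k _ => hw2 k
      _ ≤ D * b * 8 := by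
          rw [← mul_sum]
          exact mul_le_mul_of_nonneg_left (sum_range_sqrt_div_sq_le _) (by positivity)
      _ ≤ 1 / (8 * b) := by
          rw [le_div_iff₀ (by positivity)]; nlinarith
  -- shell `0` carries weight `√0 = 0`, so `T` may contain it
  calc ∑ m ∈ T, w m ≤ ∑ m ∈ range (T.sup id + 2), w m :=
        sum_le_sum_of_subset_of_nonneg ((subset_range_sup_succ T).trans (range_mono (by omega)))
          fun m _ _ => hw m
    _ = ∑ k ∈ range (T.sup id), w (k + 2) + w 1 + w 0 := by rw [sum_range_succ', sum_range_succ']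
    _ ≤ 1 / (8 * b) + 1 / (16 * b) + 0 := by gcongr; simp [w]
    _ ≤ 1 / (4 * b) := by
        rw [div_add_div _ _ (by positivity) (by positivity), add_zero,
          div_le_div_iff₀ (by positivity) (by positivity)]
        nlinarith

/-- (Estimate (4.4) from the Hölder regularity proof.) If no
particle lies within `δ/2` of `E`, the number of particles at distance in
`[δ/2 + (m−1), δ/2 + m]` from `E` is at most `D·√m` for every `m ≥ 1`, and
`δ ≥ 8b√D`, then `∑ᵢ b/((xᵢ − E)² + b²) ≤ 1/(4b)`. -/
theorem stmt_16
    (x : ℕ → ℝ) (E δ b D : ℝ)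
    (hδ : 0 < δ) (hδ1 : δ ≤ 1) (hb : 0 < b) (hD : 1 ≤ D)
    (hgap : ∀ i : ℕ, δ / 2 ≤ |x i - E|)
    (hcount : ∀ m : ℕ, 1 ≤ m →
      {i : ℕ | δ / 2 + ((m : ℝ) - 1) ≤ |x i - E| ∧ |x i - E| ≤ δ / 2 + m}.Finite ∧
      ({i : ℕ | δ / 2 + ((m : ℝ) - 1) ≤ |x i - E| ∧ |x i - E| ≤ δ / 2 + m}.ncard : ℝ)
        ≤ D * Real.sqrt m)
    (hδb : 8 * b * Real.sqrt D ≤ δ) :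
    ∑' i : ℕ, b / ((x i - E) ^ 2 + b ^ 2) ≤ 1 / (4 * b) := by
  refine tsum_le_of_sum_le' (by positivity) fun s => ?_
  set shell : ℕ → ℕ := fun i => ⌊|x i - E| - δ / 2⌋₊ + 1
  have hshell : ∀ i, δ / 2 + ((shell i : ℝ) - 1) ≤ |x i - E| ∧ |x i - E| ≤ δ / 2 + shell i :=
    fun i => natFloor_sub_add_one_bounds (hgap i)
  have hcard : ∀ i ∈ s, (#{j ∈ s | shell j = shell i} : ℝ) ≤ D * √(shell i) := fun i _ => by
    obtain ⟨hfin, hle⟩ := hcount (shell i) (Nat.le_add_left 1 _)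
    refine le_trans (Nat.cast_le.2 ?_) hle
    rw [← Set.ncard_coe_finset]
    refine Set.ncard_le_ncard (fun j hj => ?_) hfin
    obtain ⟨-, hj⟩ : j ∈ s ∧ shell j = shell i := by simpa using hj
    exact hj ▸ hshell j
  calc ∑ i ∈ s, b / ((x i - E) ^ 2 + b ^ 2)
      ≤ ∑ m ∈ s.image shell, D * √m * (b / ((δ / 2 + ((m : ℝ) - 1)) ^ 2 + b ^ 2)) :=
        sum_le_sum_image_mul_of_card_fiber_le
          (fun i _ => div_sq_add_sq_le_of_le_abs hb
            (by simp only [shell, Nat.cast_add_one, add_sub_cancel_right]; positivity) (hshell i).1)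
          (fun i _ => by positivity) hcard
    _ ≤ 1 / (4 * b) := sum_shell_weight_le hδ.le hδ1 hb (by linarith) hδb _
end

section
/- Let B ≥ 1 and let x, a : ℕ → ℝ satisfy a_i < 0 and |x_i − a_i| ≤ B for all i, and |a_{i−1} + (3πi/2)^{2/3}| ≤ B for all i ≥ 1. Then the series ∑_{i∈ℕ} (1/a_i − x_i/(1 + x_i²)) converges absolutely, i.e. ∑_{i∈ℕ} |1/a_i − x_i/(1 + x_i²)| < ∞. -/
/-- Pointwise bound: if `A ≤ -(t+B)`, `X ≤ -t` with `t ≥ 1` and `|X - A| ≤ B`, then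
`|1/A - X/(1+X²)| ≤ (B+1)/(t*t)`. -/
lemma stmt_17_aux (B t A X : ℝ) (hB : 1 ≤ B) (ht : 1 ≤ t)
    (hA : A ≤ -(t + B)) (hX : X ≤ -t) (hax : |X - A| ≤ B) :
    |1 / A - X / (1 + X ^ 2)| ≤ (B + 1) / (t * t) := by
  have hA0 : A < 0 := by linarith
  have hX0 : X < 0 := by linarith
  have hAne : A ≠ 0 := ne_of_lt hA0
  have hXne : X ≠ 0 := ne_of_lt hX0
  have hden : (0:ℝ) < 1 + X ^ 2 := by positivity
  have ht0 : (0:ℝ) < t := by linarith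
  have h1 : |1 / A - 1 / X| ≤ B / (t * t) := by
    have heq : 1 / A - 1 / X = (X - A) / (A * X) := by
      field_simp
    rw [heq, abs_div]
    have hAX : t * t ≤ |A * X| := by
      have : t * t ≤ A * X := by nlinarith
      calc t * t ≤ A * X := this
        _ ≤ |A * X| := le_abs_self _
    exact div_le_div₀ (by linarith) hax (by positivity) hAX
  have h2 : |1 / X - X / (1 + X ^ 2)| ≤ 1 / (t * t) := by
    have heq : 1 / X - X / (1 + X ^ 2) = 1 / (X * (1 + X ^ 2)) := by
      field_simp
      ring
    rw [heq, abs_div, abs_one]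
    have hb : t * t ≤ |X * (1 + X ^ 2)| := by
      have h1' : t * t ≤ (-X) * (1 + X ^ 2) := by nlinarith
      calc t * t ≤ (-X) * (1 + X ^ 2) := h1'
        _ = |X * (1 + X ^ 2)| := by
            rw [abs_of_nonpos (by nlinarith : X * (1 + X ^ 2) ≤ 0)]; ring
    exact div_le_div₀ (by norm_num) le_rfl (by positivity) hb
  calc |1 / A - X / (1 + X ^ 2)|
      ≤ |1 / A - 1 / X| + |1 / X - X / (1 + X ^ 2)| := abs_sub_le _ _ _
    _ ≤ B / (t * t) + 1 / (t * t) := add_le_add h1 h2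
    _ = (B + 1) / (t * t) := by rw [add_div]

set_option maxHeartbeats 1000000 in
/-- (Convergence claim (2.16).) If `aᵢ < 0`, `|xᵢ − aᵢ| ≤ B`, and
`|a_{i−1} + (3πi/2)^{2/3}| ≤ B` for all `i ≥ 1`, then the series
`∑ᵢ (1/aᵢ − xᵢ/(1 + xᵢ²))` converges absolutely. -/
theorem stmt_17
    (B : ℝ) (hB : 1 ≤ B)
    (x a : ℕ → ℝ)
    (ha_neg : ∀ i, a i < 0)
    (hxa : ∀ i, |x i - a i| ≤ B)
    (ha : ∀ i : ℕ, 1 ≤ i →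
      |a (i - 1) + (3 * Real.pi * i / 2) ^ ((2 : ℝ) / 3)| ≤ B) :
    Summable (fun i : ℕ => |1 / a i - x i / (1 + (x i) ^ 2)|) := by
  obtain ⟨N, hNle⟩ : ∃ N : ℕ, ((2 * B) ^ (3:ℕ) : ℝ) ≤ (N:ℝ) :=
    ⟨⌈(2 * B) ^ (3:ℕ)⌉₊, Nat.le_ceil _⟩
  rw [← summable_nat_add_iff N]
  -- comparison series
  have hsum : Summable (fun n : ℕ => (B + 1) /
      (((n:ℝ) + 1) ^ ((2:ℝ)/3) * ((n:ℝ) + 1) ^ ((2:ℝ)/3))) := by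
    have base : Summable (fun n : ℕ => ((n:ℝ)) ^ (-(4:ℝ)/3)) :=
      Real.summable_nat_rpow.mpr (by norm_num)
    have shifted : Summable (fun n : ℕ => (((n + 1 : ℕ)):ℝ) ^ (-(4:ℝ)/3)) :=
      (summable_nat_add_iff 1).mpr base
    have := shifted.mul_left (B + 1)
    refine this.congr fun n => ?_
    have hpos : (0:ℝ) < (n:ℝ) + 1 := by positivity
    rw [← Real.rpow_add hpos]
    push_cast
    rw [show (2:ℝ)/3 + 2/3 = (4:ℝ)/3 by norm_num,
      show (-(4:ℝ)/3) = -((4:ℝ)/3) by norm_num,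
      Real.rpow_neg (le_of_lt hpos)]
    ring
  refine Summable.of_nonneg_of_le (fun n => abs_nonneg _) (fun n => ?_) hsum
  set i : ℕ := n + N with hi
  -- basic positivity
  have hpos_i : (0:ℝ) < (i:ℝ) + 1 := by positivity
  set ti : ℝ := ((i:ℝ) + 1) ^ ((2:ℝ)/3) with hti
  set t : ℝ := ((n:ℝ) + 1) ^ ((2:ℝ)/3) with htdef
  have ht1 : (1:ℝ) ≤ t := by
    have := Real.rpow_le_rpow (le_of_lt one_pos)
      (by linarith [Nat.cast_nonneg (α := ℝ) n] : (1:ℝ) ≤ (n:ℝ) + 1)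
      (by norm_num : (0:ℝ) ≤ (2:ℝ)/3)
    simpa [Real.one_rpow] using this
  have htt : t ≤ ti := by
    apply Real.rpow_le_rpow (by positivity) _ (by norm_num)
    have : (n:ℝ) ≤ (i:ℝ) := by exact_mod_cast Nat.le_add_right n N
    linarith
  -- ti ≥ 2B
  have htB : 2 * B ≤ ti := by
    have hcb : ((2 * B) ^ (3:ℕ) : ℝ) ≤ (i:ℝ) + 1 := by
      have h2 : (N:ℝ) ≤ (i:ℝ) := by exact_mod_cast Nat.le_add_left N n
      linarith [hNle]
    have h2B : (0:ℝ) < 2 * B := by linarith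
    have key : ((2 * B) ^ (3:ℕ) : ℝ) ^ ((2:ℝ)/3) ≤ ti :=
      Real.rpow_le_rpow (by positivity) hcb (by norm_num)
    have heq : ((2 * B) ^ (3:ℕ) : ℝ) ^ ((2:ℝ)/3) = (2 * B) ^ (2:ℕ) := by
      rw [← Real.rpow_natCast (2 * B) 3, ← Real.rpow_mul (le_of_lt h2B),
        show ((3:ℕ):ℝ) * ((2:ℝ)/3) = (2:ℝ) by norm_num,
        ← Real.rpow_natCast (2 * B) 2]
      norm_num
    have hsq : 2 * B ≤ (2 * B) ^ (2:ℕ) := by nlinarith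
    rw [heq] at key
    linarith
  -- lower bound on (3π(i+1)/2)^{2/3}
  have hbig : 2 * ti ≤ (3 * Real.pi * ((i:ℝ) + 1) / 2) ^ ((2:ℝ)/3) := by
    have hpi : (3:ℝ) < Real.pi := Real.pi_gt_three
    have hsplit : (3 * Real.pi * ((i:ℝ) + 1) / 2) ^ ((2:ℝ)/3)
        = (3 * Real.pi / 2) ^ ((2:ℝ)/3) * ti := by
      rw [hti, show 3 * Real.pi * ((i:ℝ) + 1) / 2 = (3 * Real.pi / 2) * ((i:ℝ) + 1) by ring,
        Real.mul_rpow (by positivity) (by positivity)]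
    have hcoef : (2:ℝ) ≤ (3 * Real.pi / 2) ^ ((2:ℝ)/3) := by
      have h4 : (4:ℝ) ≤ 3 * Real.pi / 2 := by nlinarith
      have hstep : (4:ℝ) ^ ((2:ℝ)/3) ≤ (3 * Real.pi / 2) ^ ((2:ℝ)/3) :=
        Real.rpow_le_rpow (by norm_num) h4 (by norm_num)
      have h4eq : (4:ℝ) ^ ((2:ℝ)/3) = (2:ℝ) ^ ((4:ℝ)/3) := by
        rw [show (4:ℝ) = (2:ℝ) ^ (2:ℝ) by
            rw [show (2:ℝ) = ((2:ℕ):ℝ) by norm_num]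
            rw [Real.rpow_natCast]; norm_num,
          ← Real.rpow_mul (by norm_num : (0:ℝ) ≤ 2)]
        norm_num
      have h2le : (2:ℝ) ≤ (2:ℝ) ^ ((4:ℝ)/3) := by
        nth_rewrite 1 [show (2:ℝ) = (2:ℝ) ^ (1:ℝ) by rw [Real.rpow_one]]
        exact Real.rpow_le_rpow_left_iff (by norm_num : (1:ℝ) < 2) |>.mpr (by norm_num)
      linarith [h4eq ▸ hstep]
    have hti0 : (0:ℝ) ≤ ti := by positivity
    rw [hsplit]
    nlinarith
  -- bound on a i
  have hai : a i ≤ -(t + B) := by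
    have h := ha (i + 1) (by omega)
    have hcast : ((i + 1 : ℕ):ℝ) = (i:ℝ) + 1 := by push_cast; ring
    rw [show i + 1 - 1 = i from rfl, hcast] at h
    have h' : a i + (3 * Real.pi * ((i:ℝ) + 1) / 2) ^ ((2:ℝ)/3) ≤ B := (abs_le.mp h).2
    linarith
  -- bound on x i
  have hxi : x i ≤ -t := by
    have := (abs_le.mp (hxa i)).2
    linarith
  have key := stmt_17_aux B t (a i) (x i) hB ht1 hai hxi
    (by simpa using hxa i)
  simpa [hi, htdef] using key
end
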